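/- arXiv:1802.04324 — 4 statements merged into one kernel-verified Lean document; each statement's English description precedes it below -/
import Mathlib

section
/- Let R and R' be alternative rings and let φ : R → R' be a bijective Lie multiplicative map. Suppose R contains a nontrivial idempotent e₁ satisfying conditions (i) and (ii). Then for any a₁₂ ∈ R₁₂ and b₂₁ ∈ R₂₁, one has φ(a₁₂ + b₂₁) = φ(a₁₂) + φ(b₂₁). -/
/-- The Lie bracket (commutator) in a not-necessarily-associative ring. -/
def lieBr {R : Type*} [NonUnitalNonAssocRing R] (x y : R) : R := x * y - y * x

/-- `R` is an alternative ring: `(x*x)*y = x*(x*y)` and `(y*x)*x = y*(x*x)`. -/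
def IsAlternative (R : Type*) [NonUnitalNonAssocRing R] : Prop :=
  (∀ x y : R, x * x * y = x * (x * y)) ∧ (∀ x y : R, y * x * x = y * (x * x))

/-- The centre of a not-necessarily-associative ring: elements `r` whose associators
`(r,x,y)`, `(x,r,y)`, `(x,y,r)` all vanish and which commute with everything. -/
def ringCenter (R : Type*) [NonUnitalNonAssocRing R] : Set R :=
  {r | (∀ x y : R, r * x * y = r * (x * y)) ∧ (∀ x y : R, x * r * y = x * (r * y)) ∧
       (∀ x y : R, x * y * r = x * (y * r)) ∧ (∀ x : R, r * x = x * r)}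

/-- `e` is a nontrivial idempotent: idempotent, nonzero and not a multiplicative identity. -/
def IsNontrivialIdempotent {R : Type*} [NonUnitalNonAssocRing R] (e : R) : Prop :=
  e * e = e ∧ e ≠ 0 ∧ ¬ (∀ x : R, e * x = x ∧ x * e = x)

/-- Peirce component `R₁₁` relative to the idempotent `e`. -/
def peirce11 {R : Type*} [NonUnitalNonAssocRing R] (e : R) : Set R :=
  {x | e * x = x ∧ x * e = x}

/-- Peirce component `R₁₂` relative to the idempotent `e`. -/
def peirce12 {R : Type*} [NonUnitalNonAssocRing R] (e : R) : Set R :=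
  {x | e * x = x ∧ x * e = 0}

/-- Peirce component `R₂₁` relative to the idempotent `e`. -/
def peirce21 {R : Type*} [NonUnitalNonAssocRing R] (e : R) : Set R :=
  {x | e * x = 0 ∧ x * e = x}

/-- Peirce component `R₂₂` relative to the idempotent `e`. -/
def peirce22 {R : Type*} [NonUnitalNonAssocRing R] (e : R) : Set R :=
  {x | e * x = 0 ∧ x * e = 0}

/-- Condition (i): if `a₁₁ + a₂₂` commutes with every element of `R₁₂`, it is central. -/
def CondI {R : Type*} [NonUnitalNonAssocRing R] (e : R) : Prop :=
  ∀ a b : R, a ∈ peirce11 e → b ∈ peirce22 e →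
    (∀ m ∈ peirce12 e, lieBr (a + b) m = 0) → a + b ∈ ringCenter R

/-- Condition (ii): if `a₁₁ + a₂₂` commutes with every element of `R₂₁`, it is central. -/
def CondII {R : Type*} [NonUnitalNonAssocRing R] (e : R) : Prop :=
  ∀ a b : R, a ∈ peirce11 e → b ∈ peirce22 e →
    (∀ m ∈ peirce21 e, lieBr (a + b) m = 0) → a + b ∈ ringCenter R

/-- A map `φ` is Lie multiplicative if `φ [x,y] = [φ x, φ y]`. -/
def IsLieMultiplicative {R R' : Type*} [NonUnitalNonAssocRing R] [NonUnitalNonAssocRing R']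
    (φ : R → R') : Prop :=
  ∀ x y : R, φ (lieBr x y) = lieBr (φ x) (φ y)

/-- A map `D` is Lie triple derivable if
`D [[x,y],z] = [[D x,y],z] + [[x,D y],z] + [[x,y],D z]`. -/
def IsLieTripleDerivable {R : Type*} [NonUnitalNonAssocRing R] (D : R → R) : Prop :=
  ∀ x y z : R, D (lieBr (lieBr x y) z) =
    lieBr (lieBr (D x) y) z + lieBr (lieBr x (D y)) z + lieBr (lieBr x y) (D z)

/-- A map `D` is Lie derivable if `D [x,y] = [D x, y] + [x, D y]`. -/
def IsLieDerivable {R : Type*} [NonUnitalNonAssocRing R] (D : R → R) : Prop :=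
  ∀ x y : R, D (lieBr x y) = lieBr (D x) y + lieBr x (D y)

/-- `I` is a two-sided ideal (as a set) of the not-necessarily-associative ring `R`. -/
def IsTwoSidedIdealSet {R : Type*} [NonUnitalNonAssocRing R] (I : Set R) : Prop :=
  (0 : R) ∈ I ∧ (∀ a b : R, a ∈ I → b ∈ I → a + b ∈ I) ∧ (∀ a : R, a ∈ I → -a ∈ I) ∧
  (∀ r a : R, a ∈ I → r * a ∈ I ∧ a * r ∈ I)

/-- `R` is prime: for any two nonzero two-sided ideals `A`, `B`, some product `a*b` with
`a ∈ A`, `b ∈ B` is nonzero (i.e. `A·B ≠ 0`). -/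
def IsPrimeRing (R : Type*) [NonUnitalNonAssocRing R] : Prop :=
  ∀ A B : Set R, IsTwoSidedIdealSet A → IsTwoSidedIdealSet B → A ≠ {0} → B ≠ {0} →
    ∃ a ∈ A, ∃ b ∈ B, a * b ≠ 0

/-- `R` is 3-torsion free: `3x = 0` implies `x = 0`. -/
def ThreeTorsionFree (R : Type*) [NonUnitalNonAssocRing R] : Prop :=
  ∀ x : R, x + x + x = 0 → x = 0

section LieMulAux

variable {S : Type*} [NonUnitalNonAssocRing S]

private lemma lieBr_add_left' (x y w : S) :
    lieBr (x + y) w = lieBr x w + lieBr y w := by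
  simp only [lieBr, add_mul, mul_add]; abel

private lemma asc12' (hS : IsAlternative S) (x y z : S) :
    x * y * z - x * (y * z) = -(y * x * z - y * (x * z)) := by
  have e1 : (x + y) * (x + y) * z - (x + y) * ((x + y) * z) = 0 :=
    sub_eq_zero_of_eq (hS.1 (x + y) z)
  have e2 : x * x * z - x * (x * z) = 0 := sub_eq_zero_of_eq (hS.1 x z)
  have e3 : y * y * z - y * (y * z) = 0 := sub_eq_zero_of_eq (hS.1 y z)
  have key : (x * y * z - x * (y * z)) + (y * x * z - y * (x * z)) =
      ((x + y) * (x + y) * z - (x + y) * ((x + y) * z)) -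
        (x * x * z - x * (x * z)) - (y * y * z - y * (y * z)) := by
    simp only [add_mul, mul_add]; abel
  rw [e1, e2, e3] at key
  have key2 : (x * y * z - x * (y * z)) + (y * x * z - y * (x * z)) = 0 := by
    rw [key]; abel
  exact eq_neg_of_add_eq_zero_left key2

private lemma asc23' (hS : IsAlternative S) (x y z : S) :
    x * y * z - x * (y * z) = -(x * z * y - x * (z * y)) := by
  have e1 : x * (y + z) * (y + z) - x * ((y + z) * (y + z)) = 0 :=
    sub_eq_zero_of_eq (hS.2 (y + z) x)
  have e2 : x * y * y - x * (y * y) = 0 := sub_eq_zero_of_eq (hS.2 y x)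
  have e3 : x * z * z - x * (z * z) = 0 := sub_eq_zero_of_eq (hS.2 z x)
  have key : (x * y * z - x * (y * z)) + (x * z * y - x * (z * y)) =
      (x * (y + z) * (y + z) - x * ((y + z) * (y + z))) -
        (x * y * y - x * (y * y)) - (x * z * z - x * (z * z)) := by
    simp only [add_mul, mul_add]; abel
  rw [e1, e2, e3] at key
  have key2 : (x * y * z - x * (y * z)) + (x * z * y - x * (z * y)) = 0 := by
    rw [key]; abel
  exact eq_neg_of_add_eq_zero_left key2

end LieMulAux

theorem lieMul_add_12_21
    {R R' : Type*} [NonUnitalNonAssocRing R] [NonUnitalNonAssocRing R']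
    (hR : IsAlternative R) (hR' : IsAlternative R')
    (φ : R → R') (hbij : Function.Bijective φ) (hlie : IsLieMultiplicative φ)
    (e : R) (he : IsNontrivialIdempotent e) (hi : CondI e) (hii : CondII e) :
    ∀ a b : R, a ∈ peirce12 e → b ∈ peirce21 e → φ (a + b) = φ a + φ b := by
  intro a b ha hb
  obtain ⟨hea, hae⟩ := ha
  obtain ⟨heb, hbe⟩ := hb
  have hee : e * e = e := he.1
  have hinj : Function.Injective φ := hbij.1
  have h0 : φ 0 = 0 := by
    have h := hlie 0 0
    simpa [lieBr] using h
  obtain ⟨k, hk⟩ := hbij.2 (φ e + φ b)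
  have hsplit : ∀ w, φ (lieBr k w) = φ (lieBr e w) + φ (lieBr b w) := by
    intro w
    rw [hlie, hk, lieBr_add_left', ← hlie, ← hlie]
  have hbee : lieBr e e = 0 := by simp [lieBr]
  have hbbe : lieBr b e = b := by simp [lieBr, hbe, heb]
  have h1 : lieBr k e = b := by
    apply hinj
    rw [hsplit e, hbee, h0, hbbe, zero_add]
  obtain ⟨x, hxdef⟩ : ∃ x, x = k - e - b := ⟨_, rfl⟩
  have hkx : k = x + e + b := by rw [hxdef]; abel
  have hxe0 : lieBr x e = 0 := by
    have hsum : lieBr k e = lieBr x e + lieBr e e + lieBr b e := by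
      rw [hkx, lieBr_add_left', lieBr_add_left']
    rw [h1, hbee, add_zero, hbbe] at hsum
    exact add_right_cancel (hsum.symm.trans (zero_add b).symm)
  have hxe : x * e = e * x := by
    have h := hxe0
    rw [lieBr] at h
    exact sub_eq_zero.mp h
  -- p and q : the R₁₁ and R₂₂ parts of x
  obtain ⟨p, hpdef⟩ : ∃ p, p = e * x := ⟨_, rfl⟩
  have h2ex : e * (e * x) = e * x := by
    have h := hR.1 e x
    rw [hee] at h
    exact h.symm
  have hep : e * p = p := by rw [hpdef]; exact h2ex
  have hpe : p * e = p := by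
    have h := asc23' hR e x e
    rw [hee, h2ex] at h
    have hflex : e * x * e = e * (x * e) := sub_eq_zero.mp (by simpa using h)
    rw [hpdef]
    calc e * x * e = e * (x * e) := hflex
      _ = e * (e * x) := by rw [hxe]
      _ = e * x := h2ex
  obtain ⟨q, hqdef⟩ : ∃ q, q = x - p := ⟨_, rfl⟩
  have heq : e * q = 0 := by
    rw [hqdef, mul_sub, hep, hpdef]
    exact sub_self _
  have hqe : q * e = 0 := by
    rw [hqdef, sub_mul, hpe, hxe, hpdef]
    exact sub_self _
  have hpq : p + q = x := by rw [hqdef]; abel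
  -- Peirce product lemmas for m ∈ R₁₂
  have pl1 : ∀ m : R, e * m = m → m * e = 0 → e * (b * m) = 0 := by
    intro m hem hme
    have h := asc12' hR e b m
    rw [heb, hbe, hem] at h
    simpa using h
  have pl2 : ∀ m : R, e * m = m → m * e = 0 → b * m * e = 0 := by
    intro m hem hme
    have h := asc23' hR b m e
    rw [hbe, hem, hme] at h
    simpa using h
  have pl3 : ∀ m : R, e * m = m → m * e = 0 → e * (m * b) = m * b := by
    intro m hem hme
    have h := asc12' hR e m b
    rw [hem, hme, heb] at h
    exact (sub_eq_zero.mp (by simpa using h)).symm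
  have pl4 : ∀ m : R, e * m = m → m * e = 0 → m * b * e = m * b := by
    intro m hem hme
    have h := asc23' hR m b e
    rw [hbe, hme, heb] at h
    exact sub_eq_zero.mp (by simpa using h)
  have hgbr : ∀ m : R, e * m = m → m * e = 0 → lieBr (lieBr b m) e = 0 := by
    intro m hem hme
    rw [lieBr, lieBr, sub_mul, mul_sub, pl1 m hem hme, pl2 m hem hme,
      pl3 m hem hme, pl4 m hem hme]
    abel
  -- key : lieBr x m = 0 for m ∈ R₁₂
  have key12 : ∀ m : R, e * m = m → m * e = 0 → lieBr x m = 0 := by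
    intro m hem hme
    have hbem : lieBr e m = m := by simp [lieBr, hem, hme]
    have h2 : φ (lieBr k m) = φ m + φ (lieBr b m) := by
      rw [hsplit m, hbem]
    have h3 : φ (lieBr (lieBr k m) e) = φ (lieBr m e) := by
      rw [hlie, h2, lieBr_add_left', ← hlie, ← hlie, hgbr m hem hme, h0, add_zero]
    have h4 : lieBr (lieBr k m) e = lieBr m e := hinj h3
    have hkm : lieBr k m = lieBr x m + m + lieBr b m := by
      rw [hkx, lieBr_add_left', lieBr_add_left', hbem]
    rw [hkm, lieBr_add_left', lieBr_add_left', hgbr m hem hme, add_zero] at h4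
    have h5 : lieBr (lieBr x m) e = 0 :=
      add_right_cancel (h4.trans (zero_add (lieBr m e)).symm)
    have l_pm1 : e * (p * m) = p * m := by
      have h := asc12' hR e p m
      rw [hep, hpe, hem] at h
      exact (sub_eq_zero.mp (by simpa using h)).symm
    have l_pm2 : p * m * e = 0 := by
      have h := asc23' hR p m e
      rw [hpe, hem, hme] at h
      simpa using h
    have l_mp : m * p = 0 := by
      have hI := asc12' hR m p e
      rw [hpe, hme, l_pm2] at hI
      have hI' : m * p * e = m * p := sub_eq_zero.mp (by simpa using hI)
      have hII := asc23' hR m p e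
      rw [hpe, hme, hep, hI'] at hII
      have h' : (0:R) = m * p := by simpa using hII
      exact h'.symm
    have l_mq1 : e * (m * q) = m * q := by
      have h := asc12' hR e m q
      rw [hem, hme, heq] at h
      exact (sub_eq_zero.mp (by simpa using h)).symm
    have l_mq2 : m * q * e = 0 := by
      have h := asc23' hR m q e
      rw [hqe, hme, heq] at h
      simpa using h
    have l_qm : q * m = 0 := by
      have hI := asc12' hR q m e
      rw [hme, hqe, l_mq2] at hI
      have hI' : q * m * e = 0 := by simpa using hI
      have hII := asc23' hR q m e
      rw [hme, hqe, hem, hI'] at hII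
      have h' : (0:R) = q * m := by simpa using hII
      exact h'.symm
    have hxm : lieBr x m = p * m - m * q := by
      rw [lieBr, ← hpq, add_mul, mul_add, l_qm, l_mp]
      abel
    have hpsie : lieBr (lieBr x m) e = -(lieBr x m) := by
      rw [hxm, lieBr, sub_mul, mul_sub, l_pm2, l_mq2, l_pm1, l_mq1]
      abel
    rw [hpsie, neg_eq_zero] at h5
    exact h5
  -- x is central by Condition (i)
  have hxZ : x ∈ ringCenter R := by
    have hc := hi p q ⟨hep, hpe⟩ ⟨heq, hqe⟩ (by
      intro m hm
      rw [hpq]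
      exact key12 m hm.1 hm.2)
    rwa [hpq] at hc
  obtain ⟨-, -, -, hxc⟩ := hxZ
  -- bracket k with e + a
  obtain ⟨g0, hg0def⟩ : ∃ g, g = lieBr b a := ⟨_, rfl⟩
  have hxea : lieBr x (e + a) = 0 := by
    rw [lieBr, hxc (e + a), sub_self]
  have heea : lieBr e (e + a) = a := by
    rw [lieBr, mul_add, add_mul, hee, hea, hae]
    abel
  have hbea : lieBr b (e + a) = b + g0 := by
    rw [lieBr, mul_add, add_mul, hbe, heb, hg0def, lieBr]
    abel
  have hkea : lieBr k (e + a) = a + (b + g0) := by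
    rw [hkx, lieBr_add_left', lieBr_add_left', hxea, heea, hbea, zero_add]
  have hstep7 : φ (a + (b + g0)) = φ a + φ (b + g0) := by
    have h := hsplit (e + a)
    rw [hkea, heea, hbea] at h
    exact h
  have hg0e : lieBr g0 e = 0 := by rw [hg0def]; exact hgbr a hea hae
  have hbae : lieBr a e = -a := by simp [lieBr, hae, hea]
  have hbg0e : lieBr (b + g0) e = b := by
    rw [lieBr_add_left', hbbe, hg0e, add_zero]
  have h13a : lieBr (a + (b + g0)) e = -a + b := by
    rw [lieBr_add_left', hbae, hbg0e]
  have h13 : φ (-a + b) = φ (-a) + φ b := by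
    have h := hlie (a + (b + g0)) e
    rw [h13a, hstep7, lieBr_add_left', ← hlie, ← hlie, hbae, hbg0e] at h
    exact h
  have h14a : lieBr (-a + b) e = a + b := by
    rw [lieBr, add_mul, mul_add, hbe, heb, neg_mul, hae, mul_neg, hea]
    abel
  have hnae : lieBr (-a) e = a := by simp [lieBr, hae, hea]
  have h := hlie (-a + b) e
  rw [h14a, h13, lieBr_add_left', ← hlie, ← hlie, hbbe, hnae] at h
  exact h
end

section
/- Let R and R' be alternative rings and let φ : R → R' be a bijective Lie multiplicative map. Suppose R contains a nontrivial idempotent e₁ satisfying conditions (i) and (ii). Then for any a, b both in R₁₂, or both in R₂₁, one has φ(a + b) = φ(a) + φ(b). -/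
namespace AltAux
variable {R : Type*} [NonUnitalNonAssocRing R]

lemma lieBr_def (x y : R) : lieBr x y = x*y - y*x := rfl
lemma lieBr_add_left (a b c : R) : lieBr (a + b) c = lieBr a c + lieBr b c := by
  simp only [lieBr, add_mul, mul_add]; abel
lemma lieBr_add_right (a b c : R) : lieBr a (b + c) = lieBr a b + lieBr a c := by
  simp only [lieBr, add_mul, mul_add]; abel
lemma lieBr_sub_right (a b c : R) : lieBr a (b - c) = lieBr a b - lieBr a c := by
  simp only [lieBr, sub_mul, mul_sub]; abel

lemma sw12 (h : IsAlternative R) (a b c : R) :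
    (a*b*c - a*(b*c)) + (b*a*c - b*(a*c)) = 0 := by
  have H := h.1 (a+b) c
  simp only [add_mul, mul_add] at H
  linear_combination (norm := abel1) H - h.1 a c - h.1 b c
lemma sw23 (h : IsAlternative R) (a b c : R) :
    (a*b*c - a*(b*c)) + (a*c*b - a*(c*b)) = 0 := by
  have H := h.2 (b+c) a
  simp only [add_mul, mul_add] at H
  linear_combination (norm := abel1) H - h.2 b a - h.2 c a
lemma LAz (h : IsAlternative R) (a b : R) : a*a*b - a*(a*b) = 0 :=
  sub_eq_zero_of_eq (h.1 a b)
lemma RAz (h : IsAlternative R) (a b : R) : b*a*a - b*(a*a) = 0 :=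
  sub_eq_zero_of_eq (h.2 a b)
lemma FLz (h : IsAlternative R) (a b : R) : a*b*a - a*(b*a) = 0 := by
  linear_combination (norm := abel1) sw12 h a b a - RAz h a b
lemma cycA (h : IsAlternative R) (a b c : R) :
    a*b*c - a*(b*c) = c*a*b - c*(a*b) := by
  linear_combination (norm := abel1) sw23 h a c b - sw12 h c a b
lemma moufang_mid (h : IsAlternative R) (x y z : R) :
    x * y * (z * x) = x * (y * z) * x := by
  have hwmoufang_mid0 := congrArg (fun t => x * t) (sw12 h x z y)
  simp only [mul_add, mul_sub, mul_zero] at hwmoufang_mid0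
  have hwmoufang_mid1 := congrArg (fun t => x * t) (sw23 h x z y)
  simp only [mul_add, mul_sub, mul_zero] at hwmoufang_mid1
  have hwmoufang_mid2 := congrArg (fun t => t * x) (sw23 h x z y)
  simp only [add_mul, sub_mul, zero_mul] at hwmoufang_mid2
  have hwmoufang_mid3 := congrArg (fun t => x * t) (sw23 h z x y)
  simp only [mul_add, mul_sub, mul_zero] at hwmoufang_mid3
  have hwmoufang_mid4 := congrArg (fun t => t * x) (sw23 h y x z)
  simp only [add_mul, sub_mul, zero_mul] at hwmoufang_mid4
  have hwmoufang_mid5 := congrArg (fun t => y * t) (sw12 h x z x)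
  simp only [mul_add, mul_sub, mul_zero] at hwmoufang_mid5
  have hwmoufang_mid6 := congrArg (fun t => t * y) (FLz h x z)
  simp only [add_mul, sub_mul, zero_mul] at hwmoufang_mid6
  have hwmoufang_mid7 := congrArg (fun t => t * z) (LAz h x y)
  simp only [add_mul, sub_mul, zero_mul] at hwmoufang_mid7
  linear_combination (norm := abel1)  - (sw12 h z (x * x) y) + (sw23 h z (x * x) y) + (sw23 h x x (y * z)) - (sw12 h z y (x * x)) - (sw12 h x y (x * z)) - (sw12 h x y (x * z)) + (sw23 h x y (x * z)) + (sw23 h x y (x * z)) - (sw12 h (y * x) z x) - (sw23 h x z (x * y)) - (sw23 h x z (x * y)) + (sw23 h (x * x) z y) + (sw12 h (x * y) x z) - (sw23 h (x * y) x z) + (sw12 h (z * x) y x) + (sw12 h (z * x) y x) - (sw12 h y (x * z) x) + (sw23 h y (x * z) x) + (sw23 h y (x * z) x) - (sw23 h y x (z * x)) - (sw12 h (x * z) x y) - (sw12 h (x * z) x y) + (sw23 h x x (z * y)) - (LAz h x (z * y)) + (sw12 h x (z * x) y) + (sw12 h x (z * x) y) - (sw12 h z x (y * x)) + (sw23 h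 z x (y * x)) - (sw23 h (z * x) x y) - (sw23 h (z * x) x y) - (sw12 h x (y * z) x) + (hwmoufang_mid0) - (hwmoufang_mid1) + (hwmoufang_mid2) + (hwmoufang_mid3) + (hwmoufang_mid4) + (hwmoufang_mid5) + (hwmoufang_mid6) + (hwmoufang_mid6) - (hwmoufang_mid7)

lemma moufang_right (h : IsAlternative R) (x y z : R) :
    z * x * y * x = z * (x * (y * x)) := by
  have hwmoufang_right0 := congrArg (fun t => x * t) (sw12 h x z y)
  simp only [mul_add, mul_sub, mul_zero] at hwmoufang_right0
  have hwmoufang_right1 := congrArg (fun t => x * t) (sw23 h x z y)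
  simp only [mul_add, mul_sub, mul_zero] at hwmoufang_right1
  have hwmoufang_right2 := congrArg (fun t => t * x) (sw23 h y x z)
  simp only [add_mul, sub_mul, zero_mul] at hwmoufang_right2
  have hwmoufang_right3 := congrArg (fun t => y * t) (sw12 h x z x)
  simp only [mul_add, mul_sub, mul_zero] at hwmoufang_right3
  have hwmoufang_right4 := congrArg (fun t => t * y) (FLz h x z)
  simp only [add_mul, sub_mul, zero_mul] at hwmoufang_right4
  have hwmoufang_right5 := congrArg (fun t => t * z) (LAz h x y)
  simp only [add_mul, sub_mul, zero_mul] at hwmoufang_right5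
  linear_combination (norm := abel1)  - (sw12 h z (x * x) y) + (sw23 h z (x * x) y) + (sw23 h x x (y * z)) - (sw12 h z y (x * x)) - (sw12 h x y (x * z)) + (sw23 h x y (x * z)) - (sw12 h (y * x) z x) - (sw23 h x z (x * y)) + (sw23 h (x * x) z y) + (sw12 h (z * x) y x) + (sw12 h (z * x) y x) + (sw23 h y (x * z) x) - (sw23 h y x (z * x)) - (sw12 h (x * z) x y) + (sw12 h x (z * x) y) + (sw23 h z x (y * x)) - (sw23 h (z * x) x y) - (sw12 h x (y * z) x) + (hwmoufang_right0) - (hwmoufang_right1) + (hwmoufang_right2) + (hwmoufang_right3) + (hwmoufang_right4) - (hwmoufang_right5)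
section Peirce

-- R12 * R12 ⊆ R21
lemma p12mul12 (hR : IsAlternative R) (e : R) {a b : R} (ha1 : e*a = a) (ha2 : a*e = 0) (hb1 : e*b = b) (hb2 : b*e = 0) :
    e*(a*b) = 0 ∧ (a*b)*e = a*b := by
  have h1 := sw12 hR a e b
  rw [ha2, hb1, ha1, zero_mul] at h1
  have hL : e*(a*b) = 0 := by linear_combination (norm := abel1) -h1
  refine ⟨hL, ?_⟩
  have h2 := cycA hR a b e
  rw [hb2, ha1, mul_zero] at h2
  linear_combination (norm := abel1) h2 - hL

-- R21 * R21 ⊆ R12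
lemma p21mul21 (hR : IsAlternative R) (e : R) {a b : R} (ha1 : e*a = 0) (ha2 : a*e = a) (hb1 : e*b = 0) (hb2 : b*e = b) :
    e*(a*b) = a*b ∧ (a*b)*e = 0 := by
  have h1 := sw12 hR a e b
  rw [ha2, hb1, ha1, mul_zero, zero_mul] at h1
  have hL : e*(a*b) = a*b := by linear_combination (norm := abel1) -h1
  refine ⟨hL, ?_⟩
  have h2 := cycA hR a b e
  rw [hb2, ha1, zero_mul] at h2
  linear_combination (norm := abel1) h2 - hL

lemma sq12 (hR : IsAlternative R) (e : R) {a : R} (ha1 : e*a = a) (ha2 : a*e = 0) : a*a = 0 := by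
  have hz := (p12mul12 hR e ha1 ha2 ha1 ha2).1
  have h := hR.2 a e
  rw [ha1] at h
  rw [h, hz]

lemma sq21 (hR : IsAlternative R) (e : R) {a : R} (ha1 : e*a = 0) (ha2 : a*e = a) : a*a = 0 := by
  have hz := (p21mul21 hR e ha1 ha2 ha1 ha2).2
  have h := hR.1 a e
  -- h : a*a*e = a*(a*e)
  rw [ha2] at h
  rw [← h, hz]

lemma acomm12 (hR : IsAlternative R) (e : R) {a b : R} (ha1 : e*a = a) (ha2 : a*e = 0) (hb1 : e*b = b) (hb2 : b*e = 0) :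
    a*b = -(b*a) := by
  have hs : (a+b)*(a+b) = 0 := by
    refine sq12 hR e ?_ ?_
    · rw [mul_add, ha1, hb1]
    · rw [add_mul, ha2, hb2, add_zero]
  simp only [add_mul, mul_add] at hs
  linear_combination (norm := abel1) hs - sq12 hR e ha1 ha2 - sq12 hR e hb1 hb2

lemma acomm21 (hR : IsAlternative R) (e : R) {a b : R} (ha1 : e*a = 0) (ha2 : a*e = a) (hb1 : e*b = 0) (hb2 : b*e = b) :
    a*b = -(b*a) := by
  have hs : (a+b)*(a+b) = 0 := by
    refine sq21 hR e ?_ ?_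
    · rw [mul_add, ha1, hb1, add_zero]
    · rw [add_mul, ha2, hb2]
  simp only [add_mul, mul_add] at hs
  linear_combination (norm := abel1) hs - sq21 hR e ha1 ha2 - sq21 hR e hb1 hb2

-- R11 * R21 = 0
lemma p11mul21 (hR : IsAlternative R) (e : R) {α n : R} (hα1 : e*α = α) (hα2 : α*e = α) (hn1 : e*n = 0) (hn2 : n*e = n) :
    α*n = 0 := by
  have c1 := cycA hR e α n
  rw [hα1, hn2] at c1
  have c2 := sw12 hR α e n
  rw [hα2, hn1, hα1, mul_zero] at c2
  linear_combination (norm := abel1) c2 - c1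

-- R21 * R11 ⊆ R21
lemma p21mul11 (hR : IsAlternative R) (e : R) {α n : R} (hα1 : e*α = α) (hα2 : α*e = α) (hn1 : e*n = 0) (hn2 : n*e = n) :
    e*(n*α) = 0 ∧ (n*α)*e = n*α := by
  have d1 := sw12 hR n e α
  rw [hn2, hα1, hn1, zero_mul] at d1
  have hL : e*(n*α) = 0 := by linear_combination (norm := abel1) -d1
  refine ⟨hL, ?_⟩
  have d2 := cycA hR n α e
  rw [hα2, hn1, zero_mul] at d2
  linear_combination (norm := abel1) d2 - hL

-- R21 * R12 ⊆ R22
lemma p21mul12 (hR : IsAlternative R) (e : R) {n m : R} (hn1 : e*n = 0) (hn2 : n*e = n) (hm1 : e*m = m) (hm2 : m*e = 0) :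
    e*(n*m) = 0 ∧ (n*m)*e = 0 := by
  have d1 := sw12 hR n e m
  rw [hn2, hm1, hn1, zero_mul] at d1
  have hL : e*(n*m) = 0 := by linear_combination (norm := abel1) -d1
  refine ⟨hL, ?_⟩
  have d2 := cycA hR n m e
  rw [hm2, mul_zero, hn1, zero_mul] at d2
  linear_combination (norm := abel1) d2 - hL

-- R12 * R21 ⊆ R11
lemma p12mul21 (hR : IsAlternative R) (e : R) {n m : R} (hn1 : e*n = 0) (hn2 : n*e = n) (hm1 : e*m = m) (hm2 : m*e = 0) :
    e*(m*n) = m*n ∧ (m*n)*e = m*n := by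
  have d1 := sw12 hR m e n
  rw [hm2, hn1, hm1, zero_mul, mul_zero] at d1
  have hL : e*(m*n) = m*n := by linear_combination (norm := abel1) -d1
  refine ⟨hL, ?_⟩
  have d2 := cycA hR m n e
  rw [hn2, hm1] at d2
  linear_combination (norm := abel1) d2 - hL

-- R12 * R11 = 0  (needs Moufang)
lemma p12mul11 (hR : IsAlternative R) (e : R) {α m : R} (hα1 : e*α = α) (hα2 : α*e = α) (hm1 : e*m = m) (hm2 : m*e = 0) :
    m*α = 0 := by
  have d1 := sw12 hR m e α
  rw [hm2, hα1, hm1, zero_mul] at d1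
  have hL : e*(m*α) = 0 := by linear_combination (norm := abel1) -d1
  have d2 := moufang_mid hR e m α
  rw [hm1, hα2, hL, zero_mul] at d2
  exact d2

-- R22 * R12 = 0  (needs Moufang)
lemma p22mul12 (hR : IsAlternative R) (e : R) {t m : R} (ht1 : e*t = 0) (ht2 : t*e = 0) (hm1 : e*m = m) (hm2 : m*e = 0) :
    t*m = 0 := by
  have d1 := sw12 hR t e m
  rw [ht2, hm1, ht1, zero_mul] at d1
  have hL : e*(t*m) = -(t*m) := by linear_combination (norm := abel1) -d1
  have d2 := cycA hR t m e
  rw [hm2, mul_zero, ht1, zero_mul, hL] at d2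
  have d3 := moufang_mid hR e t m
  rw [ht1, zero_mul, hL, neg_mul] at d3
  linear_combination (norm := abel1) d3 - d2

-- R21 * R22 = 0  (needs right Moufang)
lemma p21mul22 (hR : IsAlternative R) (e : R) {n t : R} (hn1 : e*n = 0) (hn2 : n*e = n) (ht1 : e*t = 0) (ht2 : t*e = 0) :
    n*t = 0 := by
  have d1 := sw12 hR n e t
  rw [hn2, ht1, mul_zero, hn1, zero_mul] at d1
  have d3 := moufang_right hR e t n
  rw [hn2, ht2, mul_zero, mul_zero] at d3
  have d2 := cycA hR n t e
  rw [ht2, mul_zero, hn1, zero_mul] at d2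
  linear_combination (norm := abel1) d1 + d2 - d3

-- R22 * R21 ⊆ R21
lemma p22mul21 (hR : IsAlternative R) (e : R) {t n : R} (ht1 : e*t = 0) (ht2 : t*e = 0) (hn1 : e*n = 0) (hn2 : n*e = n) :
    e*(t*n) = 0 ∧ (t*n)*e = t*n := by
  have d1 := sw12 hR t e n
  rw [ht2, hn1, mul_zero, ht1, zero_mul] at d1
  have hL : e*(t*n) = 0 := by linear_combination (norm := abel1) -d1
  refine ⟨hL, ?_⟩
  have d2 := cycA hR t n e
  rw [hn2, ht1, zero_mul] at d2
  linear_combination (norm := abel1) d2 - hL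

-- R12 * R22 ⊆ R12
lemma p12mul22 (hR : IsAlternative R) (e : R) {m t : R} (hm1 : e*m = m) (hm2 : m*e = 0) (ht1 : e*t = 0) (ht2 : t*e = 0) :
    e*(m*t) = m*t ∧ (m*t)*e = 0 := by
  have d1 := sw12 hR m e t
  rw [hm2, ht1, mul_zero, hm1, zero_mul] at d1
  have hL : e*(m*t) = m*t := by linear_combination (norm := abel1) -d1
  refine ⟨hL, ?_⟩
  have d2 := cycA hR m t e
  rw [ht2, mul_zero, hm1] at d2
  linear_combination (norm := abel1) d2 - hL

-- R11 * R12 ⊆ R12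
lemma p11mul12 (hR : IsAlternative R) (e : R) {α m : R} (hα1 : e*α = α) (hα2 : α*e = α) (hm1 : e*m = m) (hm2 : m*e = 0) :
    e*(α*m) = α*m ∧ (α*m)*e = 0 := by
  have d1 := sw12 hR α e m
  rw [hα2, hm1, hα1] at d1
  have hL : e*(α*m) = α*m := by linear_combination (norm := abel1) -d1
  refine ⟨hL, ?_⟩
  have d2 := cycA hR α m e
  rw [hm2, mul_zero, hα1] at d2
  linear_combination (norm := abel1) d2 - hL

end Peirce

section PhiLayer
variable {R R' : Type*} [NonUnitalNonAssocRing R] [NonUnitalNonAssocRing R']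
variable (φ : R → R')

lemma lieBr_antisymm (x y : R) : lieBr x y = -(lieBr y x) := by
  simp only [lieBr_def]; abel

lemma phi_zero (hlie : IsLieMultiplicative φ) : φ 0 = 0 := by
  have h := hlie 0 0
  simp only [lieBr_def, mul_zero, sub_zero, sub_self] at h
  exact h

lemma brsplit (hlie : IsLieMultiplicative φ) {s u v : R} (hs : φ s = φ u + φ v) (x : R) :
    φ (lieBr x s) = φ (lieBr x u) + φ (lieBr x v) := by
  rw [hlie x s, hs, lieBr_add_right, ← hlie x u, ← hlie x v]

lemma phi_neg21 (hlie : IsLieMultiplicative φ) {e v : R}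
    (hv1 : e*v = 0) (hv2 : v*e = v) : φ (-v) = -φ v := by
  have h1 : lieBr v e = v := by rw [lieBr_def, hv2, hv1, sub_zero]
  have h2 : lieBr e v = -v := by rw [lieBr_def, hv1, hv2, zero_sub]
  have ha := hlie e v
  rw [h2] at ha
  have hb := hlie v e
  rw [h1] at hb
  rw [ha, lieBr_antisymm, ← hb]

lemma claimA1 (hR : IsAlternative R) (hbij : Function.Bijective φ)
    (hlie : IsLieMultiplicative φ) (e : R) (hee : e*e = e) (hii : CondII e)
    {α β : R} (hα1 : e*α = α) (hα2 : α*e = α) (hβ1 : e*β = β) (hβ2 : β*e = 0) :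
    ∃ D, D ∈ ringCenter R ∧ φ (α + β + D) = φ α + φ β := by
  obtain ⟨s, hs⟩ := hbij.2 (φ α + φ β)
  have heα : lieBr e α = 0 := by rw [lieBr_def, hα1, hα2, sub_self]
  have heβ : lieBr e β = β := by rw [lieBr_def, hβ1, hβ2, sub_zero]
  have h1 : lieBr e s = β := by
    apply hbij.1
    rw [brsplit φ hlie hs e, heα, heβ, phi_zero φ hlie, zero_add]
  set D := s - α - β with hD
  have hDe : e*D = D*e := by
    have h2 : lieBr e D = 0 := by
      rw [hD, lieBr_sub_right, lieBr_sub_right, h1, heα, heβ]; abel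
    rw [lieBr_def] at h2
    exact sub_eq_zero.mp h2
  have hP1 : e*(e*D) = e*D := by rw [← hR.1 e D, hee]
  have hP2 : (e*D)*e = e*D := by
    have hf := FLz hR e D
    rw [← hDe, hP1] at hf
    exact sub_eq_zero.mp hf
  have hQ1 : e*(D - e*D) = 0 := by rw [mul_sub, hP1, sub_self]
  have hQ2 : (D - e*D)*e = 0 := by rw [sub_mul, hP2, ← hDe, sub_self]
  have hsD : α + β + (e*D + (D - e*D)) = s := by rw [hD]; abel
  have key : ∀ n : R, e*n = 0 → n*e = n → lieBr (e*D + (D - e*D)) n = 0 := by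
    intro n hn1 hn2
    have hαn : α*n = 0 := p11mul21 hR e hα1 hα2 hn1 hn2
    have hnα := p21mul11 hR e hα1 hα2 hn1 hn2
    have hnβ := p21mul12 hR e hn1 hn2 hβ1 hβ2
    have hβn := p12mul21 hR e hn1 hn2 hβ1 hβ2
    have hbr1 : lieBr n α = n*α := by rw [lieBr_def, hαn, sub_zero]
    have hbr2 : lieBr e (lieBr n β) = 0 := by
      simp only [lieBr_def]
      rw [mul_sub, sub_mul, hnβ.1, hβn.1, hnβ.2, hβn.2]
      abel
    have hX : lieBr e (lieBr n s) = -(n*α) := by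
      apply hbij.1
      rw [hlie e (lieBr n s), brsplit φ hlie hs n, lieBr_add_right,
        ← hlie e (lieBr n α), ← hlie e (lieBr n β), hbr1, hbr2, phi_zero φ hlie, add_zero]
      rw [show lieBr e (n*α) = -(n*α) from by rw [lieBr_def, hnα.1, hnα.2, zero_sub]]
    have hnP : lieBr n (e*D) = n*(e*D) := by
      rw [lieBr_def, p11mul21 hR e hP1 hP2 hn1 hn2, sub_zero]
    have hnQ : lieBr n (D - e*D) = -((D - e*D)*n) := by
      rw [lieBr_def, p21mul22 hR e hn1 hn2 hQ1 hQ2, zero_sub]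
    have hnP' := p21mul11 hR e hP1 hP2 hn1 hn2
    have hQn := p22mul21 hR e hQ1 hQ2 hn1 hn2
    have hsplit : lieBr n s = lieBr n α + lieBr n β + (lieBr n (e*D) + lieBr n (D - e*D)) := by
      rw [← hsD, lieBr_add_right, lieBr_add_right, lieBr_add_right]
    have hcomp : lieBr e (lieBr n s) = -(n*α) + 0 + (-(n*(e*D))) + ((D - e*D)*n) := by
      rw [hsplit, lieBr_add_right, lieBr_add_right, lieBr_add_right, hbr2, hbr1, hnP, hnQ]
      rw [show lieBr e (n*α) = -(n*α) from by rw [lieBr_def, hnα.1, hnα.2, zero_sub]]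
      rw [show lieBr e (n*(e*D)) = -(n*(e*D)) from by rw [lieBr_def, hnP'.1, hnP'.2, zero_sub]]
      rw [show lieBr e (-((D - e*D)*n)) = (D - e*D)*n from by
        rw [lieBr_def, mul_neg, neg_mul, hQn.1, hQn.2, neg_zero, zero_sub, neg_neg]]
      abel
    have hrel : -(n*α) + 0 + (-(n*(e*D))) + ((D - e*D)*n) = -(n*α) := by
      rw [← hcomp]; exact hX
    rw [lieBr_def, add_mul, mul_add, p11mul21 hR e hP1 hP2 hn1 hn2,
      p21mul22 hR e hn1 hn2 hQ1 hQ2]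
    linear_combination (norm := abel1) hrel
  have hcen : e*D + (D - e*D) ∈ ringCenter R :=
    hii (e*D) (D - e*D) ⟨hP1, hP2⟩ ⟨hQ1, hQ2⟩ (fun n hn => key n hn.1 hn.2)
  refine ⟨e*D + (D - e*D), hcen, ?_⟩
  rw [hsD]; exact hs


lemma claimA2 (hR : IsAlternative R) (hbij : Function.Bijective φ)
    (hlie : IsLieMultiplicative φ) (e : R) (hee : e*e = e) (hi : CondI e)
    {α γ : R} (hα1 : e*α = α) (hα2 : α*e = α) (hγ1 : e*γ = 0) (hγ2 : γ*e = γ) :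
    ∃ D, D ∈ ringCenter R ∧ φ (α + γ + D) = φ α + φ γ := by
  obtain ⟨s, hs⟩ := hbij.2 (φ α + φ γ)
  have heα : lieBr e α = 0 := by rw [lieBr_def, hα1, hα2, sub_self]
  have heγ : lieBr e γ = -γ := by rw [lieBr_def, hγ1, hγ2, zero_sub]
  have h1 : lieBr e s = -γ := by
    apply hbij.1
    rw [brsplit φ hlie hs e, heα, heγ, phi_zero φ hlie, zero_add]
  set D := s - α - γ with hD
  have hDe : e*D = D*e := by
    have h2 : lieBr e D = 0 := by
      rw [hD, lieBr_sub_right, lieBr_sub_right, h1, heα, heγ]; abel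
    rw [lieBr_def] at h2
    exact sub_eq_zero.mp h2
  have hP1 : e*(e*D) = e*D := by rw [← hR.1 e D, hee]
  have hP2 : (e*D)*e = e*D := by
    have hf := FLz hR e D
    rw [← hDe, hP1] at hf
    exact sub_eq_zero.mp hf
  have hQ1 : e*(D - e*D) = 0 := by rw [mul_sub, hP1, sub_self]
  have hQ2 : (D - e*D)*e = 0 := by rw [sub_mul, hP2, ← hDe, sub_self]
  have hsD : α + γ + (e*D + (D - e*D)) = s := by rw [hD]; abel
  have key : ∀ m : R, e*m = m → m*e = 0 → lieBr (e*D + (D - e*D)) m = 0 := by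
    intro m hm1 hm2
    have hmα : m*α = 0 := p12mul11 hR e hα1 hα2 hm1 hm2
    have hαm := p11mul12 hR e hα1 hα2 hm1 hm2
    have hmγ := p12mul21 hR e hγ1 hγ2 hm1 hm2
    have hγm := p21mul12 hR e hγ1 hγ2 hm1 hm2
    have hbr1 : lieBr m α = -(α*m) := by rw [lieBr_def, hmα, zero_sub]
    have hbr2 : lieBr e (lieBr m γ) = 0 := by
      simp only [lieBr_def]
      rw [mul_sub, sub_mul, hmγ.1, hγm.1, hmγ.2, hγm.2]
      abel
    have hXlem : lieBr e (-(α*m)) = -(α*m) := by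
      rw [lieBr_def, mul_neg, neg_mul, hαm.1, hαm.2, neg_zero, sub_zero]
    have hX : lieBr e (lieBr m s) = -(α*m) := by
      apply hbij.1
      rw [hlie e (lieBr m s), brsplit φ hlie hs m, lieBr_add_right,
        ← hlie e (lieBr m α), ← hlie e (lieBr m γ), hbr1, hbr2, phi_zero φ hlie, add_zero,
        hXlem]
    have hmP : lieBr m (e*D) = -((e*D)*m) := by
      rw [lieBr_def, p12mul11 hR e hP1 hP2 hm1 hm2, zero_sub]
    have hmQ : lieBr m (D - e*D) = m*(D - e*D) := by
      rw [lieBr_def, p22mul12 hR e hQ1 hQ2 hm1 hm2, sub_zero]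
    have hPm := p11mul12 hR e hP1 hP2 hm1 hm2
    have hmQ' := p12mul22 hR e hm1 hm2 hQ1 hQ2
    have hsplit : lieBr m s = lieBr m α + lieBr m γ + (lieBr m (e*D) + lieBr m (D - e*D)) := by
      rw [← hsD, lieBr_add_right, lieBr_add_right, lieBr_add_right]
    have hcomp : lieBr e (lieBr m s) = -(α*m) + 0 + (-((e*D)*m)) + m*(D - e*D) := by
      rw [hsplit, lieBr_add_right, lieBr_add_right, lieBr_add_right, hbr2, hbr1, hmP, hmQ]
      rw [hXlem]
      rw [show lieBr e (-((e*D)*m)) = -((e*D)*m) from by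
        rw [lieBr_def, mul_neg, neg_mul, hPm.1, hPm.2, neg_zero, sub_zero]]
      rw [show lieBr e (m*(D - e*D)) = m*(D - e*D) from by
        rw [lieBr_def, hmQ'.1, hmQ'.2, sub_zero]]
      abel
    have hrel : -(α*m) + 0 + (-((e*D)*m)) + m*(D - e*D) = -(α*m) := by
      rw [← hcomp]; exact hX
    rw [lieBr_def, add_mul, mul_add, p22mul12 hR e hQ1 hQ2 hm1 hm2,
      p12mul11 hR e hP1 hP2 hm1 hm2]
    linear_combination (norm := abel1) -hrel
  have hcen : e*D + (D - e*D) ∈ ringCenter R :=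
    hi (e*D) (D - e*D) ⟨hP1, hP2⟩ ⟨hQ1, hQ2⟩ (fun m hm => key m hm.1 hm.2)
  refine ⟨e*D + (D - e*D), hcen, ?_⟩
  rw [hsD]; exact hs

lemma claimC (hR : IsAlternative R) (hbij : Function.Bijective φ)
    (hlie : IsLieMultiplicative φ) (e : R) (hee : e*e = e) (hi : CondI e) (hii : CondII e)
    {p q : R} (hp1 : e*p = p) (hp2 : p*e = 0) (hq1 : e*q = 0) (hq2 : q*e = q)
    (hpq : p*q = q*p) : φ (p + q) = φ p + φ q := by
  have hne1 : e*(-e) = -e := by rw [mul_neg, hee]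
  have hne2 : (-e)*e = -e := by rw [neg_mul, hee]
  obtain ⟨D₁, hD₁, hs₁⟩ := claimA1 φ hR hbij hlie e hee hii hne1 hne2 hp1 hp2
  obtain ⟨D₂, hD₂, hs₂⟩ := claimA2 φ hR hbij hlie e hee hi hne1 hne2 hq1 hq2
  have c1 : ∀ y : R, lieBr D₁ y = 0 := fun y => by rw [lieBr_def, hD₁.2.2.2 y, sub_self]
  have c2 : ∀ x : R, lieBr x D₂ = 0 := fun x => by rw [lieBr_def, ← hD₂.2.2.2 x, sub_self]
  have bee : lieBr (-e) (-e) = (0:R) := by rw [lieBr_def, sub_self]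
  have beq : lieBr (-e) q = q := by
    rw [lieBr_def, neg_mul, mul_neg, hq1, hq2, neg_zero, zero_sub, neg_neg]
  have bpe : lieBr p (-e) = p := by
    rw [lieBr_def, neg_mul, mul_neg, hp1, hp2, neg_zero, zero_sub, neg_neg]
  have bpq : lieBr p q = (0:R) := by rw [lieBr_def, hpq, sub_self]
  have hbr : lieBr (-e + p + D₁) (-e + q + D₂) = p + q := by
    simp only [lieBr_add_left, lieBr_add_right, c1, c2, bee, beq, bpe, bpq]
    abel
  have f1 : lieBr (φ (-e)) (φ (-e)) = (0:R') := by
    rw [← hlie, bee, phi_zero φ hlie]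
  have f2 : lieBr (φ (-e)) (φ q) = φ q := by rw [← hlie, beq]
  have f3 : lieBr (φ p) (φ (-e)) = φ p := by rw [← hlie, bpe]
  have f4 : lieBr (φ p) (φ q) = (0:R') := by rw [← hlie, bpq, phi_zero φ hlie]
  have h0 := hlie (-e + p + D₁) (-e + q + D₂)
  rw [hbr, hs₁, hs₂] at h0
  rw [h0, lieBr_add_left, lieBr_add_right, lieBr_add_right, f1, f2, f3, f4]
  abel

end PhiLayer
end AltAux

theorem lieMul_add_offdiag
    {R R' : Type*} [NonUnitalNonAssocRing R] [NonUnitalNonAssocRing R']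
    (hR : IsAlternative R) (hR' : IsAlternative R')
    (φ : R → R') (hbij : Function.Bijective φ) (hlie : IsLieMultiplicative φ)
    (e : R) (he : IsNontrivialIdempotent e) (hi : CondI e) (hii : CondII e) :
    ∀ a b : R, (a ∈ peirce12 e ∧ b ∈ peirce12 e) ∨ (a ∈ peirce21 e ∧ b ∈ peirce21 e) →
      φ (a + b) = φ a + φ b := by
  obtain ⟨hee, -, -⟩ := he
  have hne1 : e*(-e) = -e := by rw [mul_neg, hee]
  have hne2 : (-e)*e = -e := by rw [neg_mul, hee]
  intro a b hab
  rcases hab with ⟨ha, hb⟩ | ⟨ha, hb⟩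
  · obtain ⟨ha1, ha2⟩ := ha
    obtain ⟨hb1, hb2⟩ := hb
    have hba := AltAux.p12mul12 hR e hb1 hb2 ha1 ha2
    have hab' := AltAux.p12mul12 hR e ha1 ha2 hb1 hb2
    have hQ1 : e*(b*a - a*b) = 0 := by rw [mul_sub, hba.1, hab'.1, sub_zero]
    have hQ2 : (b*a - a*b)*e = b*a - a*b := by rw [sub_mul, hba.2, hab'.2]
    have hsqa : a*a = 0 := AltAux.sq12 hR e ha1 ha2
    have hsqb : b*b = 0 := AltAux.sq12 hR e hb1 hb2
    have hac : a*b = -(b*a) := AltAux.acomm12 hR e ha1 ha2 hb1 hb2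
    have hac' : b*a = -(a*b) := AltAux.acomm12 hR e hb1 hb2 ha1 ha2
    have z1 : a*(a*b) = 0 := by rw [← hR.1 a b, hsqa, zero_mul]
    have z2 : b*(b*a) = 0 := by rw [← hR.1 b a, hsqb, zero_mul]
    have z3 : a*(b*a) = 0 := by rw [hac', mul_neg, z1, neg_zero]
    have z4 : b*(a*b) = 0 := by rw [hac, mul_neg, z2, neg_zero]
    have z5 : (a*b)*b = 0 := by rw [hR.2 b a, hsqb, mul_zero]
    have z6 : (b*a)*a = 0 := by rw [hR.2 a b, hsqa, mul_zero]
    have z7 : (a*b)*a = 0 := by rw [hac, neg_mul, z6, neg_zero]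
    have z8 : (b*a)*b = 0 := by rw [hac', neg_mul, z5, neg_zero]
    have hz1 : (a+b)*(b*a - a*b) = 0 := by
      rw [mul_sub, add_mul, add_mul, z3, z2, z1, z4]; abel
    have hz2 : (b*a - a*b)*(a+b) = 0 := by
      rw [sub_mul, mul_add, mul_add, z6, z8, z7, z5]; abel
    have hpq : (a+b)*(b*a - a*b) = (b*a - a*b)*(a+b) := by rw [hz1, hz2]
    have hp1 : e*(a+b) = a+b := by rw [mul_add, ha1, hb1]
    have hp2 : (a+b)*e = 0 := by rw [add_mul, ha2, hb2, add_zero]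
    have hC := AltAux.claimC φ hR hbij hlie e hee hi hii hp1 hp2 hQ1 hQ2 hpq
    obtain ⟨D₁, hD₁, hs₁⟩ := AltAux.claimA1 φ hR hbij hlie e hee hii hee hee hb1 hb2
    obtain ⟨D₂, hD₂, hs₂⟩ := AltAux.claimA1 φ hR hbij hlie e hee hii hne1 hne2 ha1 ha2
    have c1 : ∀ y : R, lieBr D₁ y = 0 := fun y => by
      rw [AltAux.lieBr_def, hD₁.2.2.2 y, sub_self]
    have c2 : ∀ x : R, lieBr x D₂ = 0 := fun x => by
      rw [AltAux.lieBr_def, ← hD₂.2.2.2 x, sub_self]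
    have bee : lieBr e (-e) = (0:R) := by rw [AltAux.lieBr_def, mul_neg, neg_mul, sub_self]
    have bea : lieBr e a = a := by rw [AltAux.lieBr_def, ha1, ha2, sub_zero]
    have bbe : lieBr b (-e) = b := by
      rw [AltAux.lieBr_def, mul_neg, neg_mul, hb2, hb1, neg_zero, zero_sub, neg_neg]
    have bba : lieBr b a = b*a - a*b := AltAux.lieBr_def b a
    have hbr : lieBr (e + b + D₁) (-e + a + D₂) = a + b + (b*a - a*b) := by
      simp only [AltAux.lieBr_add_left, AltAux.lieBr_add_right, c1, c2, bee, bea, bbe, bba]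
      abel
    have f1 : lieBr (φ e) (φ (-e)) = (0:R') := by rw [← hlie, bee, AltAux.phi_zero φ hlie]
    have f2 : lieBr (φ e) (φ a) = φ a := by rw [← hlie, bea]
    have f3 : lieBr (φ b) (φ (-e)) = φ b := by rw [← hlie, bbe]
    have f4 : lieBr (φ b) (φ a) = φ (b*a - a*b) := by rw [← hlie, bba]
    have h0 := hlie (e + b + D₁) (-e + a + D₂)
    rw [hbr, hs₁, hs₂, AltAux.lieBr_add_left, AltAux.lieBr_add_right,
      AltAux.lieBr_add_right, f1, f2, f3, f4, hC] at h0
    linear_combination (norm := abel1) h0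
  · obtain ⟨ha1, ha2⟩ := ha
    obtain ⟨hb1, hb2⟩ := hb
    have hba := AltAux.p21mul21 hR e hb1 hb2 ha1 ha2
    have hab' := AltAux.p21mul21 hR e ha1 ha2 hb1 hb2
    have hQ1 : e*(b*a - a*b) = b*a - a*b := by rw [mul_sub, hba.1, hab'.1]
    have hQ2 : (b*a - a*b)*e = 0 := by rw [sub_mul, hba.2, hab'.2, sub_zero]
    have hsqa : a*a = 0 := AltAux.sq21 hR e ha1 ha2
    have hsqb : b*b = 0 := AltAux.sq21 hR e hb1 hb2
    have hac : a*b = -(b*a) := AltAux.acomm21 hR e ha1 ha2 hb1 hb2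
    have hac' : b*a = -(a*b) := AltAux.acomm21 hR e hb1 hb2 ha1 ha2
    have z1 : a*(a*b) = 0 := by rw [← hR.1 a b, hsqa, zero_mul]
    have z2 : b*(b*a) = 0 := by rw [← hR.1 b a, hsqb, zero_mul]
    have z3 : a*(b*a) = 0 := by rw [hac', mul_neg, z1, neg_zero]
    have z4 : b*(a*b) = 0 := by rw [hac, mul_neg, z2, neg_zero]
    have z5 : (a*b)*b = 0 := by rw [hR.2 b a, hsqb, mul_zero]
    have z6 : (b*a)*a = 0 := by rw [hR.2 a b, hsqa, mul_zero]
    have z7 : (a*b)*a = 0 := by rw [hac, neg_mul, z6, neg_zero]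
    have z8 : (b*a)*b = 0 := by rw [hac', neg_mul, z5, neg_zero]
    have hz1 : (a+b)*(b*a - a*b) = 0 := by
      rw [mul_sub, add_mul, add_mul, z3, z2, z1, z4]; abel
    have hz2 : (b*a - a*b)*(a+b) = 0 := by
      rw [sub_mul, mul_add, mul_add, z6, z8, z7, z5]; abel
    have hq1' : e*(-(a+b)) = 0 := by rw [mul_neg, mul_add, ha1, hb1, add_zero, neg_zero]
    have hq2' : (-(a+b))*e = -(a+b) := by rw [neg_mul, add_mul, ha2, hb2]
    have hpq' : (b*a - a*b)*(-(a+b)) = (-(a+b))*(b*a - a*b) := by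
      rw [mul_neg, hz2, neg_zero, neg_mul, hz1, neg_zero]
    have hC := AltAux.claimC φ hR hbij hlie e hee hi hii hQ1 hQ2 hq1' hq2' hpq'
    obtain ⟨D₁, hD₁, hs₁⟩ := AltAux.claimA2 φ hR hbij hlie e hee hi hee hee hb1 hb2
    obtain ⟨D₂, hD₂, hs₂⟩ := AltAux.claimA2 φ hR hbij hlie e hee hi hne1 hne2 ha1 ha2
    have c1 : ∀ y : R, lieBr D₁ y = 0 := fun y => by
      rw [AltAux.lieBr_def, hD₁.2.2.2 y, sub_self]
    have c2 : ∀ x : R, lieBr x D₂ = 0 := fun x => by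
      rw [AltAux.lieBr_def, ← hD₂.2.2.2 x, sub_self]
    have bee : lieBr e (-e) = (0:R) := by rw [AltAux.lieBr_def, mul_neg, neg_mul, sub_self]
    have bea : lieBr e a = -a := by rw [AltAux.lieBr_def, ha1, ha2, zero_sub]
    have bbe : lieBr b (-e) = -b := by
      rw [AltAux.lieBr_def, mul_neg, neg_mul, hb2, hb1, neg_zero, sub_zero]
    have bba : lieBr b a = b*a - a*b := AltAux.lieBr_def b a
    have hbr : lieBr (e + b + D₁) (-e + a + D₂) = (b*a - a*b) + -(a+b) := by
      simp only [AltAux.lieBr_add_left, AltAux.lieBr_add_right, c1, c2, bee, bea, bbe, bba]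
      abel
    have f1 : lieBr (φ e) (φ (-e)) = (0:R') := by rw [← hlie, bee, AltAux.phi_zero φ hlie]
    have f2 : lieBr (φ e) (φ a) = φ (-a) := by rw [← hlie, bea]
    have f3 : lieBr (φ b) (φ (-e)) = φ (-b) := by rw [← hlie, bbe]
    have f4 : lieBr (φ b) (φ a) = φ (b*a - a*b) := by rw [← hlie, bba]
    have h0 := hlie (e + b + D₁) (-e + a + D₂)
    rw [hbr, hs₁, hs₂, AltAux.lieBr_add_left, AltAux.lieBr_add_right,
      AltAux.lieBr_add_right, f1, f2, f3, f4, hC] at h0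
    have hv1 : e*(a+b) = 0 := by rw [mul_add, ha1, hb1, add_zero]
    have hv2 : (a+b)*e = a+b := by rw [add_mul, ha2, hb2]
    rw [AltAux.phi_neg21 φ hlie hv1 hv2, AltAux.phi_neg21 φ hlie ha1 ha2,
      AltAux.phi_neg21 φ hlie hb1 hb2] at h0
    linear_combination (norm := abel1) -h0
end

section
/- Let R be an alternative ring containing a nontrivial idempotent e₁ satisfying conditions (i) and (ii), and let D : R → R be a Lie triple derivable map. Then for any a, b both in R₁₂, or both in R₂₁, one has D(a + b) = D(a) + D(b). -/
namespace LTDaux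

variable {R : Type*} [NonUnitalNonAssocRing R]

lemma lin1 (hR : IsAlternative R) (x z y : R) :
    x*z*y + z*x*y = x*(z*y) + z*(x*y) := by
  have h := hR.1 (x+z) y
  simp only [add_mul, mul_add] at h
  have k1 := hR.1 x y
  have k2 := hR.1 z y
  linear_combination (norm := abel1) h - k1 - k2

lemma lin2 (hR : IsAlternative R) (a x z : R) :
    a*x*z + a*z*x = a*(x*z) + a*(z*x) := by
  have h := hR.2 (x+z) a
  simp only [add_mul, mul_add] at h
  have k1 := hR.2 x a
  have k2 := hR.2 z a
  linear_combination (norm := abel1) h - k1 - k2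

lemma flex (hR : IsAlternative R) (x y : R) : x*y*x = x*(y*x) := by
  have h := lin1 hR x y x
  have k := hR.2 x y
  linear_combination (norm := abel1) h - k

section peirce
variable (e : R)

-- p ∈ R₁₁, v ∈ R₂₁ : p*v = 0
lemma mul_11_21 (hR : IsAlternative R) {p v : R} (hp1 : e*p = p) (hp2 : p*e = p)
    (hv1 : e*v = 0) (hv2 : v*e = v) : p*v = 0 := by
  have h1 := lin2 hR v p e
  rw [hv2, hp2, hp1] at h1
  have h2 := lin1 hR p v e
  rw [hv2, hp2] at h2
  have h3 := lin2 hR p e v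
  rw [hp2, hv1, hv2] at h3
  simp only [mul_zero] at h3
  linear_combination (norm := abel1) h1 - h2 + h3

-- v ∈ R₂₁, s ∈ R₂₂ : v*s = 0
lemma mul_21_22 (hR : IsAlternative R) {v s : R} (hv1 : e*v = 0) (hv2 : v*e = v)
    (hs1 : e*s = 0) (hs2 : s*e = 0) : v*s = 0 := by
  have f1 := lin2 hR v s e
  rw [hv2, hs2, hs1] at f1
  simp only [mul_zero] at f1
  have f3 := lin1 hR v s e
  rw [hv2, hs2] at f3
  simp only [mul_zero] at f3
  have f4 := lin2 hR s v e
  rw [hs2, hv2, hv1] at f4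
  simp only [mul_zero, zero_mul] at f4
  linear_combination (norm := abel1) f1 - f3 + f4

-- s ∈ R₂₂, u ∈ R₁₂ : s*u = 0
lemma mul_22_12 (hR : IsAlternative R) {s u : R} (hs1 : e*s = 0) (hs2 : s*e = 0)
    (hu1 : e*u = u) (hu2 : u*e = 0) : s*u = 0 := by
  have g2 := lin2 hR s u e
  rw [hs2, hu2, hu1] at g2
  simp only [zero_mul, mul_zero] at g2
  have g3 := lin1 hR s u e
  rw [hu2, hs2] at g3
  simp only [mul_zero] at g3
  have g4 := lin2 hR u s e
  rw [hu2, hs2, hs1] at g4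
  simp only [zero_mul, mul_zero] at g4
  linear_combination (norm := abel1) - g2 + g3 - g4

-- u ∈ R₁₂, p ∈ R₁₁ : u*p = 0
lemma mul_12_11 (hR : IsAlternative R) {u p : R} (hu1 : e*u = u) (hu2 : u*e = 0)
    (hp1 : e*p = p) (hp2 : p*e = p) : u*p = 0 := by
  have h2 := lin2 hR u p e
  rw [hu2, hp2, hp1] at h2
  simp only [zero_mul] at h2
  have h3 := lin1 hR u p e
  rw [hp2, hu2] at h3
  simp only [mul_zero] at h3
  have h4 := lin2 hR p u e
  rw [hp2, hu2, hu1] at h4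
  simp only [mul_zero] at h4
  linear_combination (norm := abel1) h3 - h4 - h2

-- m, n ∈ R₁₂ : m*n ∈ R₂₁
lemma mul_12_12_l (hR : IsAlternative R) {m n : R} (hm1 : e*m = m) (hm2 : m*e = 0)
    (hn1 : e*n = n) : e*(m*n) = 0 := by
  have h := lin1 hR e m n
  rw [hm1, hm2, hn1] at h
  simp only [zero_mul] at h
  linear_combination (norm := abel1) -h

lemma mul_12_12_r (hR : IsAlternative R) {m n : R} (hm2 : m*e = 0)
    (hn1 : e*n = n) (hn2 : n*e = 0) : (m*n)*e = m*n := by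
  have h := lin2 hR m n e
  rw [hm2, hn2, hn1] at h
  simp only [zero_mul, mul_zero] at h
  linear_combination (norm := abel1) h

-- v, w ∈ R₂₁ : v*w ∈ R₁₂
lemma mul_21_21_l (hR : IsAlternative R) {v w : R} (hv1 : e*v = 0) (hv2 : v*e = v)
    (hw1 : e*w = 0) : e*(v*w) = v*w := by
  have h := lin1 hR e v w
  rw [hv1, hv2, hw1] at h
  simp only [zero_mul, mul_zero] at h
  linear_combination (norm := abel1) -h

lemma mul_21_21_r (hR : IsAlternative R) {v w : R} (hv2 : v*e = v)
    (hw1 : e*w = 0) (hw2 : w*e = w) : (v*w)*e = 0 := by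
  have h := lin2 hR v w e
  rw [hv2, hw2, hw1] at h
  simp only [mul_zero] at h
  linear_combination (norm := abel1) h

-- x ∈ R₁₂, v ∈ R₂₁ : x*v ∈ R₁₁
lemma mul_12_21_l (hR : IsAlternative R) {x v : R} (hx1 : e*x = x) (hx2 : x*e = 0)
    (hv1 : e*v = 0) : e*(x*v) = x*v := by
  have h := lin1 hR e x v
  rw [hx1, hx2, hv1] at h
  simp only [zero_mul, mul_zero] at h
  linear_combination (norm := abel1) -h

lemma mul_12_21_r (hR : IsAlternative R) {x v : R} (hx2 : x*e = 0)
    (hv1 : e*v = 0) (hv2 : v*e = v) : (x*v)*e = x*v := by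
  have h := lin2 hR x v e
  rw [hx2, hv2, hv1] at h
  simp only [zero_mul, mul_zero] at h
  linear_combination (norm := abel1) h

-- v ∈ R₂₁, x ∈ R₁₂ : v*x ∈ R₂₂
lemma mul_21_12_l (hR : IsAlternative R) {v x : R} (hv1 : e*v = 0) (hv2 : v*e = v)
    (hx1 : e*x = x) : e*(v*x) = 0 := by
  have h := lin1 hR e v x
  rw [hv1, hv2, hx1] at h
  simp only [zero_mul] at h
  linear_combination (norm := abel1) -h

lemma mul_21_12_r (hR : IsAlternative R) {v x : R} (hv2 : v*e = v)
    (hx1 : e*x = x) (hx2 : x*e = 0) : (v*x)*e = 0 := by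
  have h := lin2 hR v x e
  rw [hv2, hx2, hx1] at h
  simp only [mul_zero] at h
  linear_combination (norm := abel1) h

-- p ∈ R₁₁, u ∈ R₁₂ : p*u ∈ R₁₂
lemma mul_11_12_l (hR : IsAlternative R) {p u : R} (hp1 : e*p = p) (hp2 : p*e = p)
    (hu1 : e*u = u) : e*(p*u) = p*u := by
  have h := lin1 hR e p u
  rw [hp1, hp2, hu1] at h
  linear_combination (norm := abel1) -h

lemma mul_11_12_r (hR : IsAlternative R) {p u : R} (hp1 : e*p = p) (hp2 : p*e = p)
    (hu1 : e*u = u) (hu2 : u*e = 0) : (p*u)*e = 0 := by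
  have h4 := lin2 hR p u e
  rw [hp2, hu2, hu1] at h4
  simp only [mul_zero] at h4
  linear_combination (norm := abel1) h4

-- u ∈ R₁₂, s ∈ R₂₂ : u*s ∈ R₁₂
lemma mul_12_22_l (hR : IsAlternative R) {u s : R} (hu1 : e*u = u) (hu2 : u*e = 0)
    (hs1 : e*s = 0) : e*(u*s) = u*s := by
  have h := lin1 hR e u s
  rw [hu1, hu2, hs1] at h
  simp only [zero_mul, mul_zero] at h
  linear_combination (norm := abel1) -h

lemma mul_12_22_r (hR : IsAlternative R) {u s : R} (hu2 : u*e = 0)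
    (hs1 : e*s = 0) (hs2 : s*e = 0) : (u*s)*e = 0 := by
  have h := lin2 hR u s e
  rw [hu2, hs2, hs1] at h
  simp only [zero_mul, mul_zero] at h
  linear_combination (norm := abel1) h

-- s ∈ R₂₂, v ∈ R₂₁ : s*v ∈ R₂₁
lemma mul_22_21_l (hR : IsAlternative R) {s v : R} (hs1 : e*s = 0) (hs2 : s*e = 0)
    (hv1 : e*v = 0) : e*(s*v) = 0 := by
  have h := lin1 hR e s v
  rw [hs1, hs2, hv1] at h
  simp only [zero_mul, mul_zero] at h
  linear_combination (norm := abel1) -h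

lemma mul_22_21_r (hR : IsAlternative R) {s v : R} (hs1 : e*s = 0) (hs2 : s*e = 0)
    (hv1 : e*v = 0) (hv2 : v*e = v) : (s*v)*e = s*v := by
  have h := lin2 hR s v e
  rw [hs2, hv2, hv1] at h
  simp only [zero_mul, mul_zero] at h
  linear_combination (norm := abel1) h

-- v ∈ R₂₁, p ∈ R₁₁ : v*p ∈ R₂₁
lemma mul_21_11_l (hR : IsAlternative R) {v p : R} (hv1 : e*v = 0) (hv2 : v*e = v)
    (hp1 : e*p = p) : e*(v*p) = 0 := by
  have h := lin1 hR e v p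
  rw [hv1, hv2, hp1] at h
  simp only [zero_mul] at h
  linear_combination (norm := abel1) -h

lemma mul_21_11_r (hR : IsAlternative R) {v p : R} (hv2 : v*e = v)
    (hp1 : e*p = p) (hp2 : p*e = p) : (v*p)*e = v*p := by
  have h := lin2 hR v p e
  rw [hv2, hp2, hp1] at h
  linear_combination (norm := abel1) h

end peirce

section dermach
variable {D : R → R}

lemma ltd_zero (hD : IsLieTripleDerivable D) : D 0 = 0 := by
  have h := hD 0 0 0
  simpa [lieBr] using h

/-- If `x1 = x2 + x3`, the triple-derivation relation gives a clean difference identity. -/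
lemma hD_diff (hD : IsLieTripleDerivable D) (x1 x2 x3 : R) (h : x1 = x2 + x3) (y z : R) :
    D (lieBr (lieBr x1 y) z) - D (lieBr (lieBr x2 y) z) - D (lieBr (lieBr x3 y) z)
      = lieBr (lieBr (D x1 - D x2 - D x3) y) z := by
  rw [hD x1 y z, hD x2 y z, hD x3 y z]
  subst h
  simp only [lieBr, add_mul, mul_add, sub_mul, mul_sub]
  abel

end dermach

section decomp

/-- An element killed by `u ↦ [[u,e],e]` decomposes into diagonal Peirce parts. -/
lemma diag_decomp (hR : IsAlternative R) (e : R) (he : e*e = e) (u : R) (h0 : lieBr (lieBr u e) e = 0) :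
    ∃ p s : R, (e*p = p ∧ p*e = p) ∧ (e*s = 0 ∧ s*e = 0) ∧ u = p + s := by
  have heu : e*(e*u) = e*u := by
    have h := hR.1 e u; rw [he] at h; exact h.symm
  have hue : (u*e)*e = u*e := by
    have h := hR.2 e u; rw [he] at h; exact h
  have hflex : (e*u)*e = e*(u*e) := flex hR e u
  have hp1 : e*(e*(u*e)) = e*(u*e) := by
    have h := hR.1 e (u*e); rw [he] at h; exact h.symm
  have hp2 : (e*(u*e))*e = e*(u*e) := by
    have h := flex hR e (u*e)
    rw [hue] at h; exact h
  refine ⟨e*(u*e), u - e*u - u*e + e*(u*e), ⟨hp1, hp2⟩, ⟨?_, ?_⟩, ?_⟩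
  · simp only [mul_sub, mul_add, heu, hp1]
    abel
  · simp only [sub_mul, add_mul, hue, hflex, hp2]
    abel
  · simp only [lieBr, sub_mul, mul_sub] at h0
    rw [hue, hflex, heu] at h0
    linear_combination (norm := abel1) h0

end decomp
section central
variable {D : R → R}

/-- For `x ∈ R₁₂`, the element `D(e+x) - D x - D e` commutes with everything. -/
lemma comm12 (hR : IsAlternative R) (e : R) (he : e*e = e) (hii : CondII e)
    (hD : IsLieTripleDerivable D) (x : R) (hx1 : e*x = x) (hx2 : x*e = 0) :
    ∀ r : R, (D (e+x) - D x - D e) * r = r * (D (e+x) - D x - D e) := by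
  -- Step A : the element is diagonal
  have w1 : lieBr (lieBr (e+x) e) e = x := by
    simp only [lieBr, add_mul, mul_add, sub_mul, mul_sub, he, hx1, hx2, zero_mul, mul_zero]
    abel
  have w2 : lieBr (lieBr x e) e = x := by
    simp only [lieBr, sub_mul, mul_sub, he, hx1, hx2, zero_mul, mul_zero]
    abel
  have w3 : lieBr (lieBr e e) e = 0 := by simp [lieBr]
  have hA := hD_diff hD (e+x) x e (by abel) e e
  rw [w1, w2, w3, ltd_zero hD] at hA
  have h0 : lieBr (lieBr (D (e+x) - D x - D e) e) e = 0 := by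
    rw [← hA]; abel
  obtain ⟨p, s, hp, hs, hts⟩ := diag_decomp hR e he _ h0
  -- Step B : it commutes with R₂₁
  have hcm : ∀ v ∈ peirce21 e, lieBr (p + s) v = 0 := by
    rintro v ⟨hva, hvb⟩
    have c1 : e*(x*v) = x*v := mul_12_21_l e hR hx1 hx2 hva
    have c2 : (x*v)*e = x*v := mul_12_21_r e hR hx2 hva hvb
    have c3 : e*(v*x) = 0 := mul_21_12_l e hR hva hvb hx1
    have c4 : (v*x)*e = 0 := mul_21_12_r e hR hvb hx1 hx2
    have u1 : lieBr (lieBr (e+x) v) e = -v := by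
      simp only [lieBr, add_mul, mul_add, sub_mul, mul_sub, hva, hvb, c1, c2, c3, c4,
        zero_mul, mul_zero]
      abel
    have u2 : lieBr (lieBr x v) e = 0 := by
      simp only [lieBr, sub_mul, mul_sub, c1, c2, c3, c4]
      abel
    have u3 : lieBr (lieBr e v) e = -v := by
      simp only [lieBr, sub_mul, mul_sub, hva, hvb, zero_mul, mul_zero]
      abel
    have hB := hD_diff hD (e+x) x e (by abel) v e
    rw [u1, u2, u3, ltd_zero hD] at hB
    have hbv : lieBr (lieBr (D (e+x) - D x - D e) v) e = 0 := by
      rw [← hB]; abel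
    rw [hts] at hbv
    have hpv : p*v = 0 := mul_11_21 e hR hp.1 hp.2 hva hvb
    have hvs : v*s = 0 := mul_21_22 e hR hva hvb hs.1 hs.2
    have hsv1 : e*(s*v) = 0 := mul_22_21_l e hR hs.1 hs.2 hva
    have hsv2 : (s*v)*e = s*v := mul_22_21_r e hR hs.1 hs.2 hva hvb
    have hvp1 : e*(v*p) = 0 := mul_21_11_l e hR hva hvb hp.1
    have hvp2 : (v*p)*e = v*p := mul_21_11_r e hR hvb hp.1 hp.2
    have hval : lieBr (p+s) v = s*v - v*p := by
      simp only [lieBr, add_mul, mul_add, hpv, hvs]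
      abel
    rw [hval] at hbv ⊢
    calc s*v - v*p = lieBr (s*v - v*p) e := by
          simp only [lieBr, sub_mul, mul_sub, hsv1, hsv2, hvp1, hvp2]
          abel
      _ = 0 := hbv
  have hct := hii p s ⟨hp.1, hp.2⟩ ⟨hs.1, hs.2⟩ hcm
  intro r
  rw [hts]
  exact hct.2.2.2 r

/-- For `y ∈ R₂₁`, the element `D(e+y) - D y - D e` commutes with everything. -/
lemma comm21 (hR : IsAlternative R) (e : R) (he : e*e = e) (hi : CondI e)
    (hD : IsLieTripleDerivable D) (y : R) (hy1 : e*y = 0) (hy2 : y*e = y) :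
    ∀ r : R, (D (e+y) - D y - D e) * r = r * (D (e+y) - D y - D e) := by
  have w1 : lieBr (lieBr (e+y) e) e = y := by
    simp only [lieBr, add_mul, mul_add, sub_mul, mul_sub, he, hy1, hy2, zero_mul, mul_zero]
    abel
  have w2 : lieBr (lieBr y e) e = y := by
    simp only [lieBr, sub_mul, mul_sub, he, hy1, hy2, zero_mul, mul_zero]
    abel
  have w3 : lieBr (lieBr e e) e = 0 := by simp [lieBr]
  have hA := hD_diff hD (e+y) y e (by abel) e e
  rw [w1, w2, w3, ltd_zero hD] at hA
  have h0 : lieBr (lieBr (D (e+y) - D y - D e) e) e = 0 := by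
    rw [← hA]; abel
  obtain ⟨p, s, hp, hs, hts⟩ := diag_decomp hR e he _ h0
  have hcm : ∀ u ∈ peirce12 e, lieBr (p + s) u = 0 := by
    rintro u ⟨hua, hub⟩
    have c1 : e*(u*y) = u*y := mul_12_21_l e hR hua hub hy1
    have c2 : (u*y)*e = u*y := mul_12_21_r e hR hub hy1 hy2
    have c3 : e*(y*u) = 0 := mul_21_12_l e hR hy1 hy2 hua
    have c4 : (y*u)*e = 0 := mul_21_12_r e hR hy2 hua hub
    have u1 : lieBr (lieBr (e+y) u) e = -u := by
      simp only [lieBr, add_mul, mul_add, sub_mul, mul_sub, hua, hub, c1, c2, c3, c4,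
        zero_mul, mul_zero]
      abel
    have u2 : lieBr (lieBr y u) e = 0 := by
      simp only [lieBr, sub_mul, mul_sub, c1, c2, c3, c4]
      abel
    have u3 : lieBr (lieBr e u) e = -u := by
      simp only [lieBr, sub_mul, mul_sub, hua, hub, zero_mul, mul_zero]
      abel
    have hB := hD_diff hD (e+y) y e (by abel) u e
    rw [u1, u2, u3, ltd_zero hD] at hB
    have hbv : lieBr (lieBr (D (e+y) - D y - D e) u) e = 0 := by
      rw [← hB]; abel
    rw [hts] at hbv
    have hsu : s*u = 0 := mul_22_12 e hR hs.1 hs.2 hua hub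
    have hup : u*p = 0 := mul_12_11 e hR hua hub hp.1 hp.2
    have hpu1 : e*(p*u) = p*u := mul_11_12_l e hR hp.1 hp.2 hua
    have hpu2 : (p*u)*e = 0 := mul_11_12_r e hR hp.1 hp.2 hua hub
    have hus1 : e*(u*s) = u*s := mul_12_22_l e hR hua hub hs.1
    have hus2 : (u*s)*e = 0 := mul_12_22_r e hR hub hs.1 hs.2
    have hval : lieBr (p+s) u = p*u - u*s := by
      simp only [lieBr, add_mul, mul_add, hsu, hup]
      abel
    rw [hval] at hbv ⊢
    have : -(p*u - u*s) = lieBr (p*u - u*s) e := by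
      simp only [lieBr, sub_mul, mul_sub, hpu1, hpu2, hus1, hus2]
      abel
    rw [hbv] at this
    linear_combination (norm := abel1) -this
  have hct := hi p s ⟨hp.1, hp.2⟩ ⟨hs.1, hs.2⟩ hcm
  intro r
  rw [hts]
  exact hct.2.2.2 r

end central
section claims
variable {D : R → R}

/-- Mixed additivity: `D(x₁₂ + y₂₁) = D x₁₂ + D y₂₁`. -/
lemma claim2 (hR : IsAlternative R) (e : R) (he : e*e = e) (hi : CondI e)
    (hD : IsLieTripleDerivable D) (x y : R)
    (hx1 : e*x = x) (hx2 : x*e = 0) (hy1 : e*y = 0) (hy2 : y*e = y) :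
    D (x + y) = D x + D y := by
  have hcz := comm21 hR e he hi hD y hy1 hy2
  have c1 : e*(x*y) = x*y := mul_12_21_l e hR hx1 hx2 hy1
  have c2 : (x*y)*e = x*y := mul_12_21_r e hR hx2 hy1 hy2
  have c3 : e*(y*x) = 0 := mul_21_12_l e hR hy1 hy2 hx1
  have c4 : (y*x)*e = 0 := mul_21_12_r e hR hy2 hx1 hx2
  have w1 : lieBr (lieBr (e+y) (e-x)) e = x + y := by
    simp only [lieBr, add_mul, mul_add, sub_mul, mul_sub, he, hx1, hx2, hy1, hy2,
      c1, c2, c3, c4, zero_mul, mul_zero]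
    abel
  have w2 : lieBr (lieBr y (e-x)) e = y := by
    simp only [lieBr, add_mul, mul_add, sub_mul, mul_sub, he, hx1, hx2, hy1, hy2,
      c1, c2, c3, c4, zero_mul, mul_zero]
    abel
  have w3 : lieBr (lieBr e (e-x)) e = x := by
    simp only [lieBr, add_mul, mul_add, sub_mul, mul_sub, he, hx1, hx2, zero_mul, mul_zero]
    abel
  have h := hD_diff hD (e+y) y e (by abel) (e-x) e
  rw [w1, w2, w3] at h
  have hz : lieBr (D (e+y) - D y - D e) (e-x) = 0 := by
    have h1 := hcz (e - x)
    simp only [lieBr, h1, sub_self]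
  rw [hz] at h
  rw [show lieBr (0:R) e = 0 by simp [lieBr]] at h
  linear_combination (norm := abel1) h

/-- Additivity on `R₁₂`. -/
lemma claim12add (hR : IsAlternative R) (e : R) (he : e*e = e) (hi : CondI e)
    (hii : CondII e) (hD : IsLieTripleDerivable D) (m n : R)
    (hm1 : e*m = m) (hm2 : m*e = 0) (hn1 : e*n = n) (hn2 : n*e = 0) :
    D (m + n) = D m + D n := by
  have hcz := comm12 hR e he hii hD m hm1 hm2
  have a1 : e*(m*n) = 0 := mul_12_12_l e hR hm1 hm2 hn1
  have a2 : (m*n)*e = m*n := mul_12_12_r e hR hm2 hn1 hn2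
  have a3 : e*(n*m) = 0 := mul_12_12_l e hR hn1 hn2 hm1
  have a4 : (n*m)*e = n*m := mul_12_12_r e hR hn2 hm1 hm2
  have w1 : lieBr (lieBr (e+m) (e-n)) e = (m + n) + (n*m - m*n) := by
    simp only [lieBr, add_mul, mul_add, sub_mul, mul_sub, he, hm1, hm2, hn1, hn2,
      a1, a2, a3, a4, zero_mul, mul_zero]
    abel
  have w2 : lieBr (lieBr m (e-n)) e = m + (n*m - m*n) := by
    simp only [lieBr, add_mul, mul_add, sub_mul, mul_sub, he, hm1, hm2, hn1, hn2,
      a1, a2, a3, a4, zero_mul, mul_zero]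
    abel
  have w3 : lieBr (lieBr e (e-n)) e = n := by
    simp only [lieBr, add_mul, mul_add, sub_mul, mul_sub, he, hn1, hn2, zero_mul, mul_zero]
    abel
  have h := hD_diff hD (e+m) m e (by abel) (e-n) e
  rw [w1, w2, w3] at h
  have hz : lieBr (D (e+m) - D m - D e) (e-n) = 0 := by
    have h1 := hcz (e - n)
    simp only [lieBr, h1, sub_self]
  rw [hz] at h
  rw [show lieBr (0:R) e = 0 by simp [lieBr]] at h
  -- strip the R₂₁ part using mixed additivity
  have hq1 : D ((m+n) + (n*m - m*n)) = D (m+n) + D (n*m - m*n) := by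
    refine claim2 hR e he hi hD (m+n) (n*m - m*n) ?_ ?_ ?_ ?_
    · rw [mul_add, hm1, hn1]
    · rw [add_mul, hm2, hn2, add_zero]
    · rw [mul_sub, a1, a3, sub_zero]
    · rw [sub_mul, a2, a4]
  have hq2 : D (m + (n*m - m*n)) = D m + D (n*m - m*n) := by
    refine claim2 hR e he hi hD m (n*m - m*n) hm1 hm2 ?_ ?_
    · rw [mul_sub, a1, a3, sub_zero]
    · rw [sub_mul, a2, a4]
  rw [hq1, hq2] at h
  linear_combination (norm := abel1) h

/-- Additivity on `R₂₁`. -/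
lemma claim21add (hR : IsAlternative R) (e : R) (he : e*e = e) (hi : CondI e)
    (hD : IsLieTripleDerivable D) (v w : R)
    (hv1 : e*v = 0) (hv2 : v*e = v) (hw1 : e*w = 0) (hw2 : w*e = w) :
    D (v + w) = D v + D w := by
  have hcz := comm21 hR e he hi hD v hv1 hv2
  have a1 : e*(v*w) = v*w := mul_21_21_l e hR hv1 hv2 hw1
  have a2 : (v*w)*e = 0 := mul_21_21_r e hR hv2 hw1 hw2
  have a3 : e*(w*v) = w*v := mul_21_21_l e hR hw1 hw2 hv1
  have a4 : (w*v)*e = 0 := mul_21_21_r e hR hw2 hv1 hv2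
  have w1 : lieBr (lieBr (e+v) (e-w)) e = (v*w - w*v) + (v + w) := by
    simp only [lieBr, add_mul, mul_add, sub_mul, mul_sub, he, hv1, hv2, hw1, hw2,
      a1, a2, a3, a4, zero_mul, mul_zero]
    abel
  have w2 : lieBr (lieBr v (e-w)) e = (v*w - w*v) + v := by
    simp only [lieBr, add_mul, mul_add, sub_mul, mul_sub, he, hv1, hv2, hw1, hw2,
      a1, a2, a3, a4, zero_mul, mul_zero]
    abel
  have w3 : lieBr (lieBr e (e-w)) e = w := by
    simp only [lieBr, add_mul, mul_add, sub_mul, mul_sub, he, hw1, hw2, zero_mul, mul_zero]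
    abel
  have h := hD_diff hD (e+v) v e (by abel) (e-w) e
  rw [w1, w2, w3] at h
  have hz : lieBr (D (e+v) - D v - D e) (e-w) = 0 := by
    have h1 := hcz (e - w)
    simp only [lieBr, h1, sub_self]
  rw [hz] at h
  rw [show lieBr (0:R) e = 0 by simp [lieBr]] at h
  have hq1 : D ((v*w - w*v) + (v+w)) = D (v*w - w*v) + D (v+w) := by
    refine claim2 hR e he hi hD (v*w - w*v) (v+w) ?_ ?_ ?_ ?_
    · rw [mul_sub, a1, a3]
    · rw [sub_mul, a2, a4, sub_zero]
    · rw [mul_add, hv1, hw1, add_zero]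
    · rw [add_mul, hv2, hw2]
  have hq2 : D ((v*w - w*v) + v) = D (v*w - w*v) + D v := by
    refine claim2 hR e he hi hD (v*w - w*v) v ?_ ?_ hv1 hv2
    · rw [mul_sub, a1, a3]
    · rw [sub_mul, a2, a4, sub_zero]
  rw [hq1, hq2] at h
  linear_combination (norm := abel1) h

end claims

end LTDaux

theorem lieTripleDer_add_offdiag
    {R : Type*} [NonUnitalNonAssocRing R] (hR : IsAlternative R)
    (e : R) (he : IsNontrivialIdempotent e) (hi : CondI e) (hii : CondII e)
    (D : R → R) (hD : IsLieTripleDerivable D) :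
    ∀ a b : R, (a ∈ peirce12 e ∧ b ∈ peirce12 e) ∨ (a ∈ peirce21 e ∧ b ∈ peirce21 e) →
      D (a + b) = D a + D b := by
  intro a b hab
  rcases hab with ⟨ha, hb⟩ | ⟨ha, hb⟩
  · have ha' : e*a = a ∧ a*e = 0 := ha
    have hb' : e*b = b ∧ b*e = 0 := hb
    exact LTDaux.claim12add hR e he.1 hi hii hD a b ha'.1 ha'.2 hb'.1 hb'.2
  · have ha' : e*a = 0 ∧ a*e = a := ha
    have hb' : e*b = 0 ∧ b*e = b := hb
    exact LTDaux.claim21add hR e he.1 hi hD a b ha'.1 ha'.2 hb'.1 hb'.2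
end

section
/- Let R be an alternative ring containing a nontrivial idempotent e₁ satisfying conditions (i) and (ii), and let D : R → R be a Lie triple derivable map. Then for any a, b both in R₁₁, or both in R₂₂, there exists z ∈ Z(R) such that D(a + b) = D(a) + D(b) + z. -/
/-! ### Auxiliary machinery for the proof -/

namespace LTDProof

variable {R : Type*} [NonUnitalNonAssocRing R]

theorem lie_add_l (x y z : R) : lieBr (x + y) z = lieBr x z + lieBr y z := by
  simp only [lieBr, add_mul, mul_add]; abel

theorem lie_add_r (x y z : R) : lieBr x (y + z) = lieBr x y + lieBr x z := by
  simp only [lieBr, add_mul, mul_add]; abel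

theorem lie_zero_l (x : R) : lieBr 0 x = 0 := by simp [lieBr]

theorem lie_zero_r (x : R) : lieBr x 0 = 0 := by simp [lieBr]

theorem lie_self (x : R) : lieBr x x = 0 := by simp [lieBr]

theorem lie_neg_l (x y : R) : lieBr (-x) y = - lieBr x y := by
  simp only [lieBr, neg_mul, mul_neg]; abel

theorem lie_neg_r (x y : R) : lieBr x (-y) = - lieBr x y := by
  simp only [lieBr, neg_mul, mul_neg]; abel

theorem lie_skew (x y : R) : lieBr x y = - lieBr y x := by
  simp only [lieBr]; abel

/-- The associator. -/
def As (x y z : R) : R := x * y * z - x * (y * z)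

theorem As_tei (w x y z : R) :
    As (w*x) y z - As w (x*y) z + As w x (y*z) = w * As x y z + As w x y * z := by
  simp only [As, mul_sub, sub_mul]; abel

theorem As_add1 (x x' y z : R) : As (x+x') y z = As x y z + As x' y z := by
  simp only [As, add_mul]; abel

theorem As_add2 (x y y' z : R) : As x (y+y') z = As x y z + As x y' z := by
  simp only [As, add_mul, mul_add]; abel

theorem As_add3 (x y z z' : R) : As x y (z+z') = As x y z + As x y z' := by
  simp only [As, mul_add]; abel

variable (hR : IsAlternative R)
include hR

theorem As_aab (x y : R) : As x x y = 0 := sub_eq_zero_of_eq (hR.1 x y)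

theorem As_abb (x y : R) : As x y y = 0 := sub_eq_zero_of_eq (hR.2 y x)

theorem As_swap12 (x y z : R) : As y x z = - As x y z := by
  have h := As_aab hR (x+y) z
  rw [As_add1, As_add2, As_add2, As_aab hR, As_aab hR, zero_add, add_zero] at h
  exact eq_neg_of_add_eq_zero_right h

theorem As_swap23 (x y z : R) : As x z y = - As x y z := by
  have h := As_abb hR x (y+z)
  rw [As_add2, As_add3, As_add3, As_abb hR, As_abb hR, zero_add, add_zero] at h
  exact eq_neg_of_add_eq_zero_right h

theorem As_rot (x y z : R) : As y z x = As x y z := by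
  rw [As_swap23 hR y x z, As_swap12 hR x y z, neg_neg]

theorem As_rot2 (x y z : R) : As z x y = As x y z :=
  (As_rot hR y z x).trans (As_rot hR x y z)

theorem As_swap13 (x y z : R) : As z y x = - As x y z := by
  rw [As_swap12 hR y z x, As_rot hR x y z]

theorem As_aba (x y : R) : As x y x = 0 := by
  rw [As_swap12 hR y x x, As_abb hR y x, neg_zero]

/-- `u1 = α x`:  `(xy, z, x) = (x,y,z)·x`. -/
theorem mouf_u1 (x y z : R) : As (x*y) z x = As x y z * x := by
  have h11 := As_tei z x x y
  rw [As_aab hR x y, mul_zero, As_abb hR z x, zero_mul, add_zero,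
      As_swap23 hR (z*x) y x, As_rot2 hR (x*x) y z,
      As_swap13 hR (x*y) x z, As_swap23 hR (x*y) z x, neg_neg] at h11
  -- h11 : -As (z*x) y x - As (x*x) y z + As (x*y) z x = 0
  have h8 := As_tei y z x x
  rw [As_abb hR (y*z) x, As_abb hR z x, mul_zero, zero_add,
      As_swap12 hR (z*x) y x, As_rot hR (x*x) y z, As_rot hR x y z] at h8
  -- h8 : 0 - -As (z*x) y x + As (x*x) y z = As x y z * x
  have key : As (x*y) z x = (- As (z*x) y x - As (x*x) y z + As (x*y) z x)
      + (0 - - As (z*x) y x + As (x*x) y z) := by abel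
  rw [h11, h8, zero_add] at key
  exact key

/-- `v1 = αx + xα`. -/
theorem mouf_v1 (x y z : R) : As (x*x) y z = As x y z * x + x * As x y z := by
  have h6 := As_tei x x y z
  rw [As_aab hR x (y*z), add_zero, As_aab hR x y, zero_mul, add_zero,
      As_swap12 hR (x*y) x z, As_swap23 hR (x*y) z x, neg_neg, mouf_u1 hR] at h6
  -- h6 : As (x*x) y z - As x y z * x = x * As x y z
  have key : As (x*x) y z = (As (x*x) y z - As x y z * x) + As x y z * x := by abel
  rw [h6] at key
  rw [key]; abel

/-- `u3 = -(xα)`. -/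
theorem mouf_u3 (x y z : R) : As (z*x) y x = -(x * As x y z) := by
  have h8 := As_tei y z x x
  rw [As_abb hR (y*z) x, As_abb hR z x, mul_zero, zero_add,
      As_swap12 hR (z*x) y x, As_rot hR (x*x) y z, As_rot hR x y z, mouf_v1 hR] at h8
  -- h8 : 0 - -As (z*x) y x + (As x y z * x + x * As x y z) = As x y z * x
  have key : As (z*x) y x = (0 - - As (z*x) y x + (As x y z * x + x * As x y z))
      - (As x y z * x + x * As x y z) := by abel
  rw [h8] at key
  rw [key]; abel

/-- `u4 = -(αx)`. -/
theorem mouf_u4 (x y z : R) : As (x*z) y x = -(As x y z * x) := by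
  have h10 := As_tei x x z y
  rw [As_aab hR x (z*y), add_zero, As_aab hR x z, zero_mul, add_zero,
      As_swap23 hR (x*x) y z, As_swap12 hR (x*z) x y, As_swap23 hR (x*z) y x, neg_neg,
      As_swap23 hR x y z, mouf_v1 hR] at h10
  -- h10 : -(As x y z * x + x * As x y z) - As (x*z) y x = x * -As x y z
  have key : As (x*z) y x = -(As x y z * x + x * As x y z)
      - (-(As x y z * x + x * As x y z) - As (x*z) y x) := by abel
  rw [h10] at key
  rw [key, mul_neg]; abel

/-- `u2 = xα`. -/
theorem mouf_u2 (x y z : R) : As (y*x) z x = x * As x y z := by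
  have h9 := As_tei z y x x
  rw [As_abb hR (z*y) x, As_abb hR y x, mul_zero, zero_add,
      As_swap12 hR (y*x) z x, As_swap13 hR (x*x) y z, As_swap13 hR x y z, mouf_v1 hR] at h9
  -- h9 : 0 - -As (y*x) z x + -(As x y z * x + x * As x y z) = -As x y z * x
  have key : As (y*x) z x = (0 - - As (y*x) z x + -(As x y z * x + x * As x y z))
      + (As x y z * x + x * As x y z) := by abel
  rw [h9] at key
  rw [key, neg_mul]; abel

theorem mouf_mid (x y z : R) : (x*y)*(z*x) = (x*(y*z))*x := by
  have h1 : As x y (z*x) = x * As y z x := by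
    rw [As_swap13 hR (z*x) y x, mouf_u3 hR x y z, neg_neg, ← As_rot hR x y z]
  have h2 : As x (y*z) x = 0 := As_aba hR x (y*z)
  have e1 : x*y*(z*x) - x*(y*(z*x)) = x * (y*z*x - y*(z*x)) := h1
  have e2 : x*(y*z)*x - x*((y*z)*x) = 0 := h2
  have e2' : x*(y*z)*x = x*(y*z*x) := sub_eq_zero.mp e2
  calc x*y*(z*x) = x*(y*(z*x)) + (x*y*(z*x) - x*(y*(z*x))) := by abel
    _ = x*(y*(z*x)) + (x * (y*z*x) - x * (y*(z*x))) := by rw [e1, mul_sub]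
    _ = x*(y*z*x) := by abel
    _ = x*(y*z)*x := e2'.symm

theorem mouf_left (x y z : R) : ((x*y)*x)*z = x*(y*(x*z)) := by
  have ha : As (x*y) x z = -(As x y z * x) := by
    rw [As_swap23 hR (x*y) z x, mouf_u1 hR]
  have hb : As x y (x*z) = As x y z * x := by
    rw [As_swap13 hR (x*z) y x, mouf_u4 hR x y z, neg_neg]
  have e1 : x*y*x*z - (x*y)*(x*z) = -(As x y z * x) := ha
  have e2 : x*y*(x*z) - x*(y*(x*z)) = As x y z * x := hb
  calc x*y*x*z = (x*y)*(x*z) + (x*y*x*z - (x*y)*(x*z)) := by abel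
    _ = (x*y)*(x*z) - As x y z * x := by rw [e1]; abel
    _ = (x*(y*(x*z)) + (x*y*(x*z) - x*(y*(x*z)))) - As x y z * x := by abel
    _ = x*(y*(x*z)) := by rw [e2]; abel

theorem mouf_right (x y z : R) : ((z*x)*y)*x = z*((x*y)*x) := by
  have e1 : z*x*y*x - (z*x)*(y*x) = -(x * As x y z) := mouf_u3 hR x y z
  have e2 : As z x (y*x) = x * As x y z := by
    rw [As_swap13 hR (y*x) x z, As_swap23 hR (y*x) z x, neg_neg, mouf_u2 hR x y z]
  have e2' : z*x*(y*x) - z*(x*(y*x)) = x * As x y z := e2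
  have e3 : x*y*x - x*(y*x) = 0 := As_aba hR x y
  have e3' : x*y*x = x*(y*x) := sub_eq_zero.mp e3
  calc z*x*y*x = (z*x)*(y*x) + (z*x*y*x - (z*x)*(y*x)) := by abel
    _ = (z*x)*(y*x) - x * As x y z := by rw [e1]; abel
    _ = (z*(x*(y*x)) + (z*x*(y*x) - z*(x*(y*x)))) - x * As x y z := by abel
    _ = z*(x*(y*x)) := by rw [e2']; abel
    _ = z*(x*y*x) := by rw [e3']

end LTDProof
set_option linter.unusedSectionVars false

namespace LTDProof

section Peirce
variable {R : Type*} [NonUnitalNonAssocRing R] (hR : IsAlternative R) (e : R) (he : e * e = e)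
include hR he

theorem e_mul_e_mul (x : R) : e*(e*x) = e*x := by
  have h := hR.1 e x; rw [he] at h; exact h.symm

theorem mul_e_mul_e (x : R) : (x*e)*e = x*e := by
  have h := hR.2 e x; rwa [he] at h

theorem e_flex (x : R) : (e*x)*e = e*(x*e) := sub_eq_zero.mp (As_aba hR e x)

/-- R11 ⬝ R12 ⊆ R12 -/
theorem mul11_12 {a m : R} (ha : a ∈ peirce11 e) (hm : m ∈ peirce12 e) :
    a * m ∈ peirce12 e := by
  obtain ⟨ha1, ha2⟩ := ha; obtain ⟨hm1, hm2⟩ := hm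
  have h0 : As a e m = 0 := by simp [As, ha2, hm1]
  constructor
  · have h1 : As e a m = 0 := by rw [As_swap12 hR a e m, h0, neg_zero]
    have h2 : (e*a)*m - e*(a*m) = 0 := h1
    rw [ha1] at h2; exact (sub_eq_zero.mp h2).symm
  · have h1 : As a m e = 0 := by rw [As_swap23 hR a e m, h0, neg_zero]
    have h2 : (a*m)*e - a*(m*e) = 0 := h1
    rw [hm2, mul_zero, sub_zero] at h2; exact h2

/-- R12 ⬝ R11 = 0 -/
theorem mul12_11 {m a : R} (hm : m ∈ peirce12 e) (ha : a ∈ peirce11 e) : m * a = 0 := by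
  obtain ⟨hm1, hm2⟩ := hm; obtain ⟨ha1, ha2⟩ := ha
  have h0 : As m e a = -(m*a) := by simp [As, hm2, ha1]
  have h1 : As e m a = m*a := by rw [As_swap12 hR m e a, h0, neg_neg]
  have h2 : e*(m*a) = 0 := by
    have h3 : (e*m)*a - e*(m*a) = m*a := h1
    rw [hm1] at h3
    exact sub_eq_self.mp h3
  have h4 := mouf_mid hR e m a
  rw [hm1, ha2, h2, zero_mul] at h4
  exact h4

/-- R11 ⬝ R21 = 0 -/
theorem mul11_21 {a n : R} (ha : a ∈ peirce11 e) (hn : n ∈ peirce21 e) : a * n = 0 := by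
  obtain ⟨ha1, ha2⟩ := ha; obtain ⟨hn1, hn2⟩ := hn
  have h0 : As a e n = a*n := by simp [As, ha2, hn1]
  have h1 : As a n e = -(a*n) := by rw [As_swap23 hR a e n, h0]
  have h2 : (a*n)*e = 0 := by
    have h3 : (a*n)*e - a*(n*e) = -(a*n) := h1
    rw [hn2] at h3
    have h4 := sub_eq_iff_eq_add.mp h3
    rw [h4]; abel
  have h5 := mouf_mid hR e a n
  rw [ha1, hn2, e_flex hR e he (a*n), h2, mul_zero] at h5
  exact h5

/-- R21 ⬝ R22 = 0 -/
theorem mul21_22 {n d : R} (hn : n ∈ peirce21 e) (hd : d ∈ peirce22 e) : n * d = 0 := by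
  obtain ⟨hn1, hn2⟩ := hn; obtain ⟨hd1, hd2⟩ := hd
  have h0 : As n e d = n*d := by simp [As, hn2, hd1]
  have h1 : As n d e = -(n*d) := by rw [As_swap23 hR n e d, h0]
  have h2 : (n*d)*e - n*(d*e) = -(n*d) := h1
  rw [hd2, mul_zero, sub_zero] at h2
  have h4 := mouf_right hR e d n
  rw [hn2, hd1, zero_mul, mul_zero] at h4
  -- h4 : (n*d)*e = 0
  rw [h4] at h2
  exact neg_eq_zero.mp h2.symm

/-- R22 ⬝ R12 = 0 -/
theorem mul22_12 {d m : R} (hd : d ∈ peirce22 e) (hm : m ∈ peirce12 e) : d * m = 0 := by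
  obtain ⟨hd1, hd2⟩ := hd; obtain ⟨hm1, hm2⟩ := hm
  have h0 : As d e m = -(d*m) := by simp [As, hd2, hm1]
  have h1 : As e d m = d*m := by rw [As_swap12 hR d e m, h0, neg_neg]
  have h2 : (e*d)*m - e*(d*m) = d*m := h1
  rw [hd1, zero_mul] at h2
  -- h2 : 0 - e*(d*m) = d*m
  have h4 := mouf_left hR e d m
  rw [hd1, zero_mul, zero_mul, hm1] at h4
  -- h4 : 0 = e*(d*m)
  rw [← h4, sub_zero] at h2
  exact h2.symm

/-- R12 ⬝ R12 ⊆ R21 -/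
theorem mul12_12 {p q : R} (hp : p ∈ peirce12 e) (hq : q ∈ peirce12 e) :
    p * q ∈ peirce21 e := by
  obtain ⟨hp1, hp2⟩ := hp; obtain ⟨hq1, hq2⟩ := hq
  have h0 : As p e q = -(p*q) := by simp [As, hp2, hq1]
  constructor
  · have h1 : As e p q = p*q := by rw [As_swap12 hR p e q, h0, neg_neg]
    have h2 : (e*p)*q - e*(p*q) = p*q := h1
    rw [hp1] at h2
    exact sub_eq_self.mp h2
  · have h1 : As p q e = p*q := by rw [As_swap23 hR p e q, h0, neg_neg]
    have h2 : (p*q)*e - p*(q*e) = p*q := h1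
    rw [hq2, mul_zero, sub_zero] at h2
    exact h2

/-- R12 ⬝ R21 ⊆ R11 -/
theorem mul12_21 {p n : R} (hp : p ∈ peirce12 e) (hn : n ∈ peirce21 e) :
    p * n ∈ peirce11 e := by
  obtain ⟨hp1, hp2⟩ := hp; obtain ⟨hn1, hn2⟩ := hn
  have h0 : As p e n = 0 := by simp [As, hp2, hn1]
  constructor
  · have h1 : As e p n = 0 := by rw [As_swap12 hR p e n, h0, neg_zero]
    have h2 : (e*p)*n - e*(p*n) = 0 := h1
    rw [hp1] at h2; exact (sub_eq_zero.mp h2).symm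
  · have h1 : As p n e = 0 := by rw [As_swap23 hR p e n, h0, neg_zero]
    have h2 : (p*n)*e - p*(n*e) = 0 := h1
    rw [hn2] at h2; exact sub_eq_zero.mp h2

/-- R21 ⬝ R12 ⊆ R22 -/
theorem mul21_12 {n p : R} (hn : n ∈ peirce21 e) (hp : p ∈ peirce12 e) :
    n * p ∈ peirce22 e := by
  obtain ⟨hn1, hn2⟩ := hn; obtain ⟨hp1, hp2⟩ := hp
  have h0 : As n e p = 0 := by simp [As, hn2, hp1]
  constructor
  · have h1 : As e n p = 0 := by rw [As_swap12 hR n e p, h0, neg_zero]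
    have h2 : (e*n)*p - e*(n*p) = 0 := h1
    rw [hn1, zero_mul, zero_sub, neg_eq_zero] at h2; exact h2
  · have h1 : As n p e = 0 := by rw [As_swap23 hR n e p, h0, neg_zero]
    have h2 : (n*p)*e - n*(p*e) = 0 := h1
    rw [hp2, mul_zero, sub_zero] at h2; exact h2

/-- R12 ⬝ R22 ⊆ R12 -/
theorem mul12_22 {m d : R} (hm : m ∈ peirce12 e) (hd : d ∈ peirce22 e) :
    m * d ∈ peirce12 e := by
  obtain ⟨hm1, hm2⟩ := hm; obtain ⟨hd1, hd2⟩ := hd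
  have h0 : As m e d = 0 := by simp [As, hm2, hd1]
  constructor
  · have h1 : As e m d = 0 := by rw [As_swap12 hR m e d, h0, neg_zero]
    have h2 : (e*m)*d - e*(m*d) = 0 := h1
    rw [hm1] at h2; exact (sub_eq_zero.mp h2).symm
  · have h1 : As m d e = 0 := by rw [As_swap23 hR m e d, h0, neg_zero]
    have h2 : (m*d)*e - m*(d*e) = 0 := h1
    rw [hd2, mul_zero, sub_zero] at h2; exact h2

/-- R22 ⬝ R21 ⊆ R21 -/
theorem mul22_21 {d n : R} (hd : d ∈ peirce22 e) (hn : n ∈ peirce21 e) :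
    d * n ∈ peirce21 e := by
  obtain ⟨hd1, hd2⟩ := hd; obtain ⟨hn1, hn2⟩ := hn
  have h0 : As d e n = 0 := by simp [As, hd2, hn1]
  constructor
  · have h1 : As e d n = 0 := by rw [As_swap12 hR d e n, h0, neg_zero]
    have h2 : (e*d)*n - e*(d*n) = 0 := h1
    rw [hd1, zero_mul, zero_sub, neg_eq_zero] at h2; exact h2
  · have h1 : As d n e = 0 := by rw [As_swap23 hR d e n, h0, neg_zero]
    have h2 : (d*n)*e - d*(n*e) = 0 := h1
    rw [hn2] at h2; exact sub_eq_zero.mp h2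

/-- R21 ⬝ R11 ⊆ R21 -/
theorem mul21_11 {n a : R} (hn : n ∈ peirce21 e) (ha : a ∈ peirce11 e) :
    n * a ∈ peirce21 e := by
  obtain ⟨hn1, hn2⟩ := hn; obtain ⟨ha1, ha2⟩ := ha
  have h0 : As n e a = 0 := by simp [As, hn2, ha1]
  constructor
  · have h1 : As e n a = 0 := by rw [As_swap12 hR n e a, h0, neg_zero]
    have h2 : (e*n)*a - e*(n*a) = 0 := h1
    rw [hn1, zero_mul, zero_sub, neg_eq_zero] at h2; exact h2
  · have h1 : As n a e = 0 := by rw [As_swap23 hR n e a, h0, neg_zero]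
    have h2 : (n*a)*e - n*(a*e) = 0 := h1
    rw [ha2] at h2; exact sub_eq_zero.mp h2

end Peirce

section PeirceSets
variable {R : Type*} [NonUnitalNonAssocRing R] {e : R}

theorem p12_neg {m : R} (hm : m ∈ peirce12 e) : -m ∈ peirce12 e :=
  ⟨by rw [mul_neg, hm.1], by rw [neg_mul, hm.2, neg_zero]⟩

theorem p12_add {m n : R} (hm : m ∈ peirce12 e) (hn : n ∈ peirce12 e) :
    m + n ∈ peirce12 e :=
  ⟨by rw [mul_add, hm.1, hn.1], by rw [add_mul, hm.2, hn.2, add_zero]⟩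

theorem p21_sub {m n : R} (hm : m ∈ peirce21 e) (hn : n ∈ peirce21 e) :
    m - n ∈ peirce21 e :=
  ⟨by rw [mul_sub, hm.1, hn.1, sub_zero], by rw [sub_mul, hm.2, hn.2]⟩

end PeirceSets

end LTDProof
namespace LTDProof

variable {R : Type*} [NonUnitalNonAssocRing R]

theorem D_zero (D : R → R) (hD : IsLieTripleDerivable D) : D 0 = 0 := by
  have h := hD 0 0 0
  simpa [lie_zero_l, lie_zero_r] using h

theorem subx (D : R → R) (hD : IsLieTripleDerivable D) (a b u v : R) :
    lieBr (lieBr (D (a+b) - D a - D b) u) v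
      = D (lieBr (lieBr (a+b) u) v) - D (lieBr (lieBr a u) v) - D (lieBr (lieBr b u) v) := by
  rw [hD (a+b) u v, hD a u v, hD b u v]
  simp only [lieBr, add_mul, mul_add, sub_mul, mul_sub]
  abel

theorem sub3 (D : R → R) (hD : IsLieTripleDerivable D) (a b u v : R) :
    lieBr (lieBr u v) (D (a+b) - D a - D b)
      = D (lieBr (lieBr u v) (a+b)) - D (lieBr (lieBr u v) a) - D (lieBr (lieBr u v) b) := by
  rw [hD u v (a+b), hD u v a, hD u v b]
  simp only [lieBr, add_mul, mul_add, sub_mul, mul_sub]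
  abel

theorem commE (hR : IsAlternative R) (e : R) (he : e * e = e) (V : R)
    (h : ∀ v : R, lieBr (lieBr V e) v = 0) : V * e = e * V := by
  have hse : (V*e - e*V) * e = e * (V*e - e*V) := by
    have h2 : (V*e - e*V) * e - e * (V*e - e*V) = 0 := h e
    exact sub_eq_zero.mp h2
  have k1 : e*(e*V) = e*V := e_mul_e_mul hR e he V
  have k2 : (V*e)*e = V*e := mul_e_mul_e hR e he V
  have k3 : (e*V)*e = e*(V*e) := e_flex hR e he V
  have hsum : e*(V*e - e*V) + (V*e - e*V)*e = V*e - e*V := by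
    rw [mul_sub, sub_mul, k1, k2, k3]; abel
  have hs2 : V*e - e*V = e*(V*e - e*V) + e*(V*e - e*V) := by
    conv_lhs => rw [← hsum]
    rw [hse]
  have hes : e*(V*e - e*V) = 0 := by
    have h5 : e*(V*e - e*V) = e*(V*e - e*V) + e*(V*e - e*V) := by
      conv_lhs => rw [hs2]
      rw [mul_add, e_mul_e_mul hR e he (V*e - e*V)]
    exact add_eq_left.mp h5.symm
  have hfin : V*e - e*V = 0 := by rw [hs2, hes, add_zero]
  exact sub_eq_zero.mp hfin

theorem mem11_of (hR : IsAlternative R) (e : R) (he : e * e = e) (V : R)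
    (hVe : V*e = e*V) : e*V ∈ peirce11 e := by
  constructor
  · exact e_mul_e_mul hR e he V
  · rw [e_flex hR e he V, hVe, e_mul_e_mul hR e he V]

theorem mem22_of (hR : IsAlternative R) (e : R) (he : e * e = e) (V : R)
    (hVe : V*e = e*V) : V - e*V ∈ peirce22 e := by
  constructor
  · rw [mul_sub, e_mul_e_mul hR e he V, sub_self]
  · rw [sub_mul, hVe, e_flex hR e he V, hVe, e_mul_e_mul hR e he V, sub_self]

theorem lie_e_p12 {e m : R} (hm : m ∈ peirce12 e) : lieBr e m = m := by
  simp [lieBr, hm.1, hm.2]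

theorem lie_p12_e {e m : R} (hm : m ∈ peirce12 e) : lieBr m e = -m := by
  simp [lieBr, hm.1, hm.2]

theorem lie_p21_e {e n : R} (hn : n ∈ peirce21 e) : lieBr n e = n := by
  simp [lieBr, hn.1, hn.2]

theorem lie_p12_p12 (hR : IsAlternative R) (e : R) (he : e * e = e) {p q : R}
    (hp : p ∈ peirce12 e) (hq : q ∈ peirce12 e) : lieBr q p ∈ peirce21 e :=
  p21_sub (mul12_12 hR e he hq hp) (mul12_12 hR e he hp hq)

theorem lie_diag_p21 (hR : IsAlternative R) (e : R) (he : e * e = e) (V : R)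
    (hVe : V*e = e*V) {n : R} (hn : n ∈ peirce21 e) : lieBr V n ∈ peirce21 e := by
  have h11 := mem11_of hR e he V hVe
  have h22 := mem22_of hR e he V hVe
  have e1 : (e*V)*n = 0 := mul11_21 hR e he h11 hn
  have e2 := mul22_21 hR e he h22 hn
  have e3 := mul21_11 hR e he hn h11
  have e4 : n*(V - e*V) = 0 := mul21_22 hR e he hn h22
  have hVn : V*n = (V - e*V)*n := by rw [sub_mul, e1, sub_zero]
  have hnV : n*V = n*(e*V) := by
    have h5 : n*V - n*(e*V) = 0 := by rw [← mul_sub, e4]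
    exact sub_eq_zero.mp h5
  have h6 : lieBr V n = (V - e*V)*n - n*(e*V) := by
    simp only [lieBr]; rw [hVn, hnV]
  rw [h6]
  exact p21_sub e2 e3

/-- Claim F : `D(e + q) ≡ D e + D q` modulo the centre, for `q ∈ R₁₂`. -/
theorem claimF (hR : IsAlternative R) (e : R) (he : e * e = e) (hii : CondII e)
    (D : R → R) (hD : IsLieTripleDerivable D) {q : R} (hq : q ∈ peirce12 e) :
    D (e + q) - D e - D q ∈ ringCenter R := by
  have hF1 : ∀ v : R, lieBr (lieBr (D (e+q) - D e - D q) e) v = 0 := by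
    intro v
    have h := subx D hD e q e v
    rw [lie_add_l, lie_self, zero_add, lie_zero_l, D_zero D hD] at h
    rw [h]; abel
  have hVe := commE hR e he _ hF1
  have h11 := mem11_of hR e he _ hVe
  have h22 := mem22_of hR e he _ hVe
  have hF3 : ∀ n ∈ peirce21 e, lieBr (D (e+q) - D e - D q) n = 0 := by
    intro n hn
    have hqn : lieBr (lieBr q n) e = 0 := by
      have m1 := mul12_21 hR e he hq hn
      have m2 := mul21_12 hR e he hn hq
      simp [lieBr, sub_mul, mul_sub, m1.1, m1.2, m2.1, m2.2]
    have h := subx D hD e q n e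
    have harg : lieBr (lieBr (e+q) n) e = lieBr (lieBr e n) e := by
      rw [lie_add_l, lie_add_l, hqn, add_zero]
    rw [harg, hqn, D_zero D hD] at h
    have h0 : lieBr (lieBr (D (e+q) - D e - D q) n) e = 0 := by
      rw [h, sub_zero, sub_self]
    have hc := lie_diag_p21 hR e he _ hVe hn
    exact (lie_p21_e hc).symm.trans h0
  have hVsum : e*(D (e+q) - D e - D q) + ((D (e+q) - D e - D q) - e*(D (e+q) - D e - D q))
      = D (e+q) - D e - D q := by abel
  have hfin := hii _ _ h11 h22 (fun n hn => by rw [hVsum]; exact hF3 n hn)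
  rwa [hVsum] at hfin

/-- The H-instance: `D(-p + [q,p]) = D(-p) + D([q,p])` for `p,q ∈ R₁₂`. -/
theorem Hid (hR : IsAlternative R) (e : R) (he : e * e = e) (hii : CondII e)
    (D : R → R) (hD : IsLieTripleDerivable D) {p q : R}
    (hp : p ∈ peirce12 e) (hq : q ∈ peirce12 e) :
    D (-p + lieBr q p) = D (-p) + D (lieBr q p) := by
  have hzmem := claimF hR e he hii D hD hq
  set z := D (e+q) - D e - D q with hzdef
  have hzeq : D (e+q) = D e + D q + z := by rw [hzdef]; abel
  have hr21 : lieBr q p ∈ peirce21 e := lie_p12_p12 hR e he hp hq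
  have key := hD (e+q) p e
  have harg : lieBr (lieBr (e+q) p) e = -p + lieBr q p := by
    rw [lie_add_l, lie_add_l, lie_e_p12 hp, lie_p12_e hp, lie_p21_e hr21]
  rw [harg, hzeq] at key
  have comb : lieBr (lieBr (D e + D q + z) p) e + lieBr (lieBr (e+q) (D p)) e
      + lieBr (lieBr (e+q) p) (D e)
      = (lieBr (lieBr (D e) p) e + lieBr (lieBr e (D p)) e + lieBr (lieBr e p) (D e))
      + (lieBr (lieBr (D q) p) e + lieBr (lieBr q (D p)) e + lieBr (lieBr q p) (D e)) := by
    have hzp : z * p = p * z := hzmem.2.2.2 p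
    simp only [lieBr, add_mul, mul_add, sub_mul, mul_sub, hzp]
    abel
  rw [comb, ← hD e p e, ← hD q p e] at key
  have v1 : lieBr (lieBr e p) e = -p := by rw [lie_e_p12 hp, lie_p12_e hp]
  rw [v1, lie_p21_e hr21] at key
  exact key

/-- The G-identity: `D(p - q - [q,p]) = D p + D(-[q,p]) + D(-q)` for `p,q ∈ R₁₂`. -/
theorem Gid (hR : IsAlternative R) (e : R) (he : e * e = e) (hii : CondII e)
    (D : R → R) (hD : IsLieTripleDerivable D) {p q : R}
    (hp : p ∈ peirce12 e) (hq : q ∈ peirce12 e) :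
    D (p - q - lieBr q p) = D p + D (- lieBr q p) + D (-q) := by
  have hz1mem := claimF hR e he hii D hD hq
  have hz2mem := claimF hR e he hii D hD hp
  set z1 := D (e+q) - D e - D q with hz1def
  set z2 := D (e+p) - D e - D p with hz2def
  have hz1eq : D (e+q) = D e + D q + z1 := by rw [hz1def]; abel
  have hz2eq : D (p+e) = D p + D e + z2 := by rw [add_comm p e, hz2def]; abel
  have hr21 : lieBr q p ∈ peirce21 e := lie_p12_p12 hR e he hp hq
  have key := hD (e+q) (p+e) (-e)
  have i1 : lieBr (e+q) (p+e) = p + (lieBr q p + -q) := by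
    rw [lie_add_l, lie_add_r, lie_add_r, lie_e_p12 hp, lie_self, add_zero, lie_p12_e hq]
  have harg : lieBr (lieBr (e+q) (p+e)) (-e) = p - q - lieBr q p := by
    rw [i1, lie_neg_r, lie_add_l, lie_add_l, lie_p12_e hp, lie_p21_e hr21,
        lie_neg_l, lie_p12_e hq]
    abel
  rw [harg, hz1eq, hz2eq] at key
  have comb : lieBr (lieBr (D e + D q + z1) (p+e)) (-e)
      + lieBr (lieBr (e+q) (D p + D e + z2)) (-e)
      + lieBr (lieBr (e+q) (p+e)) (D (-e))
      = ((lieBr (lieBr (D e) p) (-e) + lieBr (lieBr e (D p)) (-e) + lieBr (lieBr e p) (D (-e)))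
      + (lieBr (lieBr (D e) e) (-e) + lieBr (lieBr e (D e)) (-e) + lieBr (lieBr e e) (D (-e))))
      + ((lieBr (lieBr (D q) p) (-e) + lieBr (lieBr q (D p)) (-e) + lieBr (lieBr q p) (D (-e)))
      + (lieBr (lieBr (D q) e) (-e) + lieBr (lieBr q (D e)) (-e) + lieBr (lieBr q e) (D (-e)))) := by
    have hz1c : ∀ x : R, z1 * x = x * z1 := hz1mem.2.2.2
    have hz2c : ∀ x : R, z2 * x = x * z2 := hz2mem.2.2.2
    simp only [lieBr, add_mul, mul_add, sub_mul, mul_sub, mul_neg, neg_mul, hz1c, hz2c]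
    abel
  rw [comb, ← hD e p (-e), ← hD e e (-e), ← hD q p (-e), ← hD q e (-e)] at key
  have v1 : lieBr (lieBr e p) (-e) = p := by
    rw [lie_e_p12 hp, lie_neg_r, lie_p12_e hp, neg_neg]
  have v2 : lieBr (lieBr e e) (-e) = 0 := by rw [lie_self, lie_zero_l]
  have v3 : lieBr (lieBr q p) (-e) = - lieBr q p := by rw [lie_neg_r, lie_p21_e hr21]
  have v4 : lieBr (lieBr q e) (-e) = -q := by
    rw [lie_p12_e hq, lie_neg_l, lie_neg_r, neg_neg, lie_p12_e hq]
  rw [v1, v2, v3, v4, D_zero D hD] at key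
  rw [key]; abel

/-- Claim E : `D` is additive on `R₁₂`. -/
theorem claimE (hR : IsAlternative R) (e : R) (he : e * e = e) (hii : CondII e)
    (D : R → R) (hD : IsLieTripleDerivable D) {p q : R}
    (hp : p ∈ peirce12 e) (hq : q ∈ peirce12 e) :
    D (p + q) = D p + D q := by
  have hG := Gid hR e he hii D hD hp (p12_neg hq)
  rw [lie_neg_l, neg_neg, neg_neg, sub_neg_eq_add, sub_neg_eq_add] at hG
  -- hG : D (p + q + lieBr q p) = D p + D (lieBr q p) + D q
  have hH := Hid hR e he hii D hD (p12_neg (p12_add hp hq)) (p12_neg hq)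
  have hbr : lieBr (-q) (-(p+q)) = lieBr q p := by
    rw [lie_neg_l, lie_neg_r, neg_neg, lie_add_r, lie_self, add_zero]
  rw [hbr, neg_neg] at hH
  -- hH : D (p + q + lieBr q p) = D (p+q) + D (lieBr q p)
  rw [hG] at hH
  have h2 : D (p+q) + D (lieBr q p) = D p + D q + D (lieBr q p) := by
    rw [← hH]; abel
  exact add_right_cancel h2

/-- The central element lemma for diagonal pairs. -/
theorem Tcenter (hR : IsAlternative R) (e : R) (he : e * e = e) (hi : CondI e)
    (D : R → R) (hD : IsLieTripleDerivable D) (a b : R)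
    (h1 : lieBr a e = 0) (h2 : lieBr b e = 0)
    (h3 : ∀ m ∈ peirce12 e,
      D (lieBr (lieBr m e) (a+b)) - D (lieBr (lieBr m e) a) - D (lieBr (lieBr m e) b) = 0) :
    D (a+b) - D a - D b ∈ ringCenter R := by
  have hF1 : ∀ v : R, lieBr (lieBr (D (a+b) - D a - D b) e) v = 0 := by
    intro v
    have h := subx D hD a b e v
    rw [lie_add_l, h1, h2, add_zero, lie_zero_l, D_zero D hD] at h
    rw [h]; abel
  have hVe := commE hR e he _ hF1
  have h11 := mem11_of hR e he _ hVe
  have h22 := mem22_of hR e he _ hVe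
  have hF4 : ∀ m ∈ peirce12 e, lieBr (D (a+b) - D a - D b) m = 0 := by
    intro m hm
    have h := sub3 D hD a b m e
    have h0 := h.trans (h3 m hm)
    rw [lie_p12_e hm, lie_neg_l] at h0
    have h5 : lieBr m (D (a+b) - D a - D b) = 0 := neg_eq_zero.mp h0
    rw [lie_skew, h5, neg_zero]
  have hsum : e*(D (a+b) - D a - D b) + ((D (a+b) - D a - D b) - e*(D (a+b) - D a - D b))
      = D (a+b) - D a - D b := by abel
  have hfin := hi _ _ h11 h22 (fun m hm => by rw [hsum]; exact hF4 m hm)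
  rwa [hsum] at hfin

end LTDProof

theorem lieTripleDer_add_diag
    {R : Type*} [NonUnitalNonAssocRing R] (hR : IsAlternative R)
    (e : R) (he : IsNontrivialIdempotent e) (hi : CondI e) (hii : CondII e)
    (D : R → R) (hD : IsLieTripleDerivable D) :
    ∀ a b : R, (a ∈ peirce11 e ∧ b ∈ peirce11 e) ∨ (a ∈ peirce22 e ∧ b ∈ peirce22 e) →
      ∃ z ∈ ringCenter R, D (a + b) = D a + D b + z := by
  obtain ⟨he1, -, -⟩ := he
  intro a b hab
  refine ⟨D (a+b) - D a - D b, ?_, by abel⟩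
  rcases hab with ⟨ha, hb⟩ | ⟨ha, hb⟩
  · refine LTDProof.Tcenter hR e he1 hi D hD a b ?_ ?_ ?_
    · show a * e - e * a = 0
      rw [ha.2, ha.1, sub_self]
    · show b * e - e * b = 0
      rw [hb.2, hb.1, sub_self]
    · intro m hm
      have hv : ∀ x : R, x ∈ peirce11 e → lieBr (lieBr m e) x = x * m := by
        intro x hx
        rw [LTDProof.lie_p12_e hm, LTDProof.lie_neg_l]
        have hb2 : lieBr m x = -(x * m) := by
          simp only [lieBr]
          rw [LTDProof.mul12_11 hR e he1 hm hx, zero_sub]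
        rw [hb2, neg_neg]
      have e2 : lieBr (lieBr m e) a = a * m := hv a ha
      have e3 : lieBr (lieBr m e) b = b * m := hv b hb
      have e1 : lieBr (lieBr m e) (a+b) = a*m + b*m := by
        rw [LTDProof.lie_add_r, e2, e3]
      rw [e1, e2, e3, LTDProof.claimE hR e he1 hii D hD
            (LTDProof.mul11_12 hR e he1 ha hm) (LTDProof.mul11_12 hR e he1 hb hm)]
      abel
  · refine LTDProof.Tcenter hR e he1 hi D hD a b ?_ ?_ ?_
    · show a * e - e * a = 0
      rw [ha.2, ha.1, sub_self]
    · show b * e - e * b = 0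
      rw [hb.2, hb.1, sub_self]
    · intro m hm
      have hv : ∀ x : R, x ∈ peirce22 e → lieBr (lieBr m e) x = -(m * x) := by
        intro x hx
        rw [LTDProof.lie_p12_e hm, LTDProof.lie_neg_l]
        have hb2 : lieBr m x = m * x := by
          simp only [lieBr]
          rw [LTDProof.mul22_12 hR e he1 hx hm, sub_zero]
        rw [hb2]
      have e2 : lieBr (lieBr m e) a = -(m * a) := hv a ha
      have e3 : lieBr (lieBr m e) b = -(m * b) := hv b hb
      have e1 : lieBr (lieBr m e) (a+b) = -(m*a) + -(m*b) := by
        rw [LTDProof.lie_add_r, e2, e3]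
      rw [e1, e2, e3, LTDProof.claimE hR e he1 hii D hD
            (LTDProof.p12_neg (LTDProof.mul12_22 hR e he1 hm ha))
            (LTDProof.p12_neg (LTDProof.mul12_22 hR e he1 hm hb))]
      abel
end
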